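/- arXiv:1308.2237 — 6 statements merged into one kernel-verified Lean document; each statement's English description precedes it below -/
import Mathlib

section
/- For 1 ≤ j < k ≤ n, the double product over pairs 1 ≤ j < k ≤ n of (1-q^{1+k-j})/(1-q^{k-j}) equals the single product over 1 ≤ j ≤ n of (1-q^j)/(1-q). -/
/-! For fixed `k`, substituting `d = k - j` turns the inner product over `j < k` into the
telescoping product `∏_{d=1}^{k} (1 - q^{d+1}) / (1 - q^d) = (1 - q^{k+1}) / (1 - q)`;
the double product is then the product of these over `k`. -/

open Finset

theorem Finset.prod_range_div_of_ne_zero {G₀ : Type*} [CommGroupWithZero G₀] (f : ℕ → G₀)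
    (hf : ∀ i, f i ≠ 0) (n : ℕ) : ∏ i ∈ range n, f (i + 1) / f i = f n / f 0 := by
  induction n with
  | zero => simp [hf 0]
  | succ n ih => rw [prod_range_succ, ih, mul_comm, div_mul_div_cancel₀ (hf n)]

theorem Finset.prod_range_ite_lt {M : Type*} [CommMonoid M] (g : ℕ → M) {k n : ℕ} (hk : k ≤ n) :
    ∏ j ∈ range n, (if j < k then g j else 1) = ∏ j ∈ range k, g j := by
  rw [← prod_filter]
  congr 1
  ext j
  simp only [mem_filter, mem_range]
  omega

section OneSubPow

variable {K : Type*} [Field K] {q : K}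

theorem prod_range_one_sub_pow_div (hq : ∀ m, q ^ (m + 1) ≠ 1) (k : ℕ) :
    ∏ j ∈ range k, (1 - q ^ (1 + k - j)) / (1 - q ^ (k - j)) = (1 - q ^ (k + 1)) / (1 - q) := by
  have hf : ∀ i, 1 - q ^ (i + 1) ≠ 0 := fun i => sub_ne_zero.mpr (hq i).symm
  have telescope := prod_range_div_of_ne_zero (fun i => 1 - q ^ (i + 1)) hf k
  rw [zero_add, pow_one] at telescope
  rw [← telescope, ← prod_range_reflect]
  refine prod_congr rfl fun i hi => ?_
  have hi : i < k := mem_range.mp hi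
  rw [show 1 + k - (k - 1 - i) = i + 1 + 1 by omega, show k - (k - 1 - i) = i + 1 by omega]

theorem prod_prod_ite_lt_one_sub_pow_div (hq : ∀ m, q ^ (m + 1) ≠ 1) (n : ℕ) :
    (∏ j : Fin n, ∏ k : Fin n,
        if j < k then (1 - q ^ (1 + (k : ℕ) - (j : ℕ))) / (1 - q ^ ((k : ℕ) - (j : ℕ))) else 1)
      = ∏ k ∈ range n, (1 - q ^ (k + 1)) / (1 - q) := by
  rw [prod_comm, ← Fin.prod_univ_eq_prod_range]
  refine prod_congr rfl fun k _ => ?_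
  rw [← prod_range_one_sub_pow_div hq, ← prod_range_ite_lt _ k.is_lt.le,
    ← Fin.prod_univ_eq_prod_range (fun j => if j < (k : ℕ) then _ else 1)]
  simp only [Fin.lt_def]

end OneSubPow

theorem double_product_poincare (q : ℝ) (hq : 0 < q) (hq1 : q < 1) (n : ℕ) :
    (∏ j : Fin n, ∏ k : Fin n,
        if j < k then (1 - q ^ (1 + (k : ℕ) - (j : ℕ))) / (1 - q ^ ((k : ℕ) - (j : ℕ))) else 1)
      = ∏ j ∈ Finset.range n, (1 - q ^ (j + 1)) / (1 - q) :=
  prod_prod_ite_lt_one_sub_pow_div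
    (fun m => (pow_lt_one₀ hq.le hq1 m.succ_ne_zero).ne) n
end

section
/- Let λ ∈ Z^n be weakly decreasing, let J ⊆ {1,...,n} be such that λ + e_J is still weakly decreasing, where e_J := Σ_{j∈J} e_j. Define V_{λ,J} := Π (1-q^{k-j+1})/(1-q^{k-j}), the product over pairs 1 ≤ j < k ≤ n with j ∈ J, k ∉ J, λ_j = λ_k. Then V_{λ,J} = Π_{l∈Z} [m_l(λ)]! / ([m_{l,J}(λ)]! [m_{l,J^c}(λ)]!), i.e. V_{λ,J} is a product of q-binomial coefficients: V_{λ,J} = Π_{l∈Z} qbinom(m_l(λ), m_{l,J}(λ)). -/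
noncomputable def qint (q : ℝ) (m : ℕ) : ℝ := (1 - q ^ m) / (1 - q)

noncomputable def qfact (q : ℝ) (m : ℕ) : ℝ := ∏ i ∈ Finset.range m, qint q (i + 1)

noncomputable def qbinom (q : ℝ) (m k : ℕ) : ℝ := qfact q m / (qfact q k * qfact q (m - k))

def mult {n : ℕ} (lam : Fin n → ℤ) (l : ℤ) : ℕ :=
  (Finset.univ.filter fun j => lam j = l).card

/-- Multiplicity of `l` among the components of `lam` with index in `J`. -/
def multIn {n : ℕ} (lam : Fin n → ℤ) (J : Finset (Fin n)) (l : ℤ) : ℕ :=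
  (J.filter fun j => lam j = l).card

/-- `V_{λ,J}`: product over pairs `j < k` with `j ∈ J`, `k ∉ J`, `λ_j = λ_k`. -/
noncomputable def Vcoef {n : ℕ} (q : ℝ) (lam : Fin n → ℤ) (J : Finset (Fin n)) : ℝ :=
  ∏ j : Fin n, ∏ k : Fin n,
    if j < k ∧ j ∈ J ∧ k ∉ J ∧ lam j = lam k then
      (1 - q ^ ((k : ℕ) - (j : ℕ) + 1)) / (1 - q ^ ((k : ℕ) - (j : ℕ))) else 1

/-! For each value `l`, antitonicity of `λ` and of `λ + e_J` makes the indices with `λ_j = l` an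
interval `[a, c)` which `J` cuts into an initial piece `[a, b)` and the rest `[b, c)`. In particular
`j ∈ J`, `k ∉ J`, `λ_j = λ_k` force `j < k`, so `V_{λ,J}` factors over the values `l` into double
products over `j ∈ [a, b)`, `k ∈ [b, c)`. The product over `k` telescopes to
`(1 - q^(c-j)) / (1 - q^(b-j))`, and the product of these over `j` is
`(1 - q^(t+1)) ⋯ (1 - q^(t+s)) / ((1 - q) ⋯ (1 - q^s))` with `s = b - a`, `t = c - b`,
which is the `q`-binomial coefficient `[s + t choose s]`. -/

open Finset

lemma one_sub_pow_ne_zero {q : ℝ} (hq : |q| < 1) {e : ℕ} (he : e ≠ 0) : 1 - q ^ e ≠ 0 := by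
  have : |q ^ e| < 1 := by rw [abs_pow]; exact pow_lt_one₀ (abs_nonneg q) hq he
  exact sub_ne_zero.mpr fun h => by simp [← h] at this

lemma prod_Ico_div_of_ne_zero {K : Type*} [Field K] {f : ℕ → K} {m n : ℕ} (hmn : m ≤ n)
    (hf : ∀ i ∈ Icc m n, f i ≠ 0) : ∏ i ∈ Ico m n, f (i + 1) / f i = f n / f m := by
  induction n, hmn using Nat.le_induction with
  | base => simp [div_self (hf m (by simp))]
  | succ n hmn ih =>
    rw [prod_Ico_succ_top hmn, ih fun i hi => hf i (Icc_subset_Icc_right n.le_succ hi),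
      div_mul_div_cancel₀' (hf n (by simp [hmn]))]

lemma qfact_eq_prod_div (q : ℝ) (m : ℕ) :
    qfact q m = (∏ i ∈ Ico 1 (m + 1), (1 - q ^ i)) / (1 - q) ^ m := by
  rw [qfact, prod_Ico_eq_prod_range, Nat.add_sub_cancel]
  simp only [qint, prod_div_distrib, prod_const, card_range, add_comm 1]

lemma qfact_add_div_qfact_mul_qfact {q : ℝ} (hq : |q| < 1) (s t : ℕ) :
    qfact q (s + t) / (qfact q s * qfact q t)
      = (∏ i ∈ Ico (t + 1) (s + t + 1), (1 - q ^ i))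
          / ∏ i ∈ Ico 1 (s + 1), (1 - q ^ i) := by
  have hq1 : 1 - q ≠ 0 := by simpa using one_sub_pow_ne_zero hq one_ne_zero
  have hP : ∀ m, ∏ i ∈ Ico 1 (m + 1), (1 - q ^ i) ≠ 0 := fun m =>
    prod_ne_zero_iff.mpr fun i hi => one_sub_pow_ne_zero hq (by rw [mem_Ico] at hi; omega)
  rw [qfact_eq_prod_div, qfact_eq_prod_div, qfact_eq_prod_div, add_comm s t,
    ← prod_Ico_consecutive _ (by omega : 1 ≤ t + 1) (by omega : t + 1 ≤ t + s + 1), pow_add]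
  have hPs := hP s
  have hPt := hP t
  field_simp

lemma prod_Ico_prod_Ico_one_sub_pow_div {q : ℝ} (hq : |q| < 1) {a b c : ℕ} (hab : a ≤ b)
    (hbc : b ≤ c) :
    ∏ j ∈ Ico a b, ∏ k ∈ Ico b c, (1 - q ^ (k - j + 1)) / (1 - q ^ (k - j))
      = qfact q (c - a) / (qfact q (b - a) * qfact q (c - b)) := by
  have inner : ∀ j ∈ Ico a b,
      ∏ k ∈ Ico b c, (1 - q ^ (k - j + 1)) / (1 - q ^ (k - j))
        = (1 - q ^ (c - j)) / (1 - q ^ (b - j)) := by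
    intro j hj
    rw [mem_Ico] at hj
    rw [← prod_Ico_div_of_ne_zero (f := fun k => 1 - q ^ (k - j)) hbc
      fun k hk => one_sub_pow_ne_zero hq (by rw [mem_Icc] at hk; omega)]
    refine prod_congr rfl fun k hk => ?_
    rw [mem_Ico] at hk
    rw [show k + 1 - j = k - j + 1 by omega]
  rw [prod_congr rfl inner, prod_div_distrib,
    prod_Ico_reflect (fun i => 1 - q ^ i) a (by omega : b ≤ c + 1),
    prod_Ico_reflect (fun i => 1 - q ^ i) a (by omega : b ≤ b + 1),
    show c - a = (b - a) + (c - b) by omega, qfact_add_div_qfact_mul_qfact hq]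
  congr 3 <;> omega

@[to_additive]
lemma prod_filter_val_mem {M : Type*} [CommMonoid M] {n : ℕ} {s : Finset ℕ}
    (hs : ∀ m ∈ s, m < n) (F : ℕ → M) :
    ∏ j ∈ univ.filter (fun j : Fin n => (j : ℕ) ∈ s), F j = ∏ m ∈ s, F m := by
  rw [prod_filter, Fin.prod_univ_eq_prod_range (fun i => if i ∈ s then F i else 1),
    ← prod_filter]
  congr 1
  ext m
  simp only [mem_filter, mem_range]
  exact ⟨And.right, fun h => ⟨hs m h, h⟩⟩

lemma card_filter_val_mem {n : ℕ} {s : Finset ℕ} (hs : ∀ m ∈ s, m < n) :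
    #(univ.filter fun j : Fin n => (j : ℕ) ∈ s) = #s := by
  rw [card_eq_sum_ones, card_eq_sum_ones]
  exact sum_filter_val_mem hs fun _ => 1

lemma Antitone.val_lt_card_filter_le_iff {α : Type*} [LinearOrder α] {n : ℕ} {h : Fin n → α}
    (hh : Antitone h) (t : α) (j : Fin n) : (j : ℕ) < #{i | t ≤ h i} ↔ t ≤ h j := by
  constructor
  · intro hj
    by_contra ht
    have : #{i | t ≤ h i} ≤ #(Iio j) := card_le_card fun i hi => by
      simp only [mem_filter, mem_univ, true_and] at hi
      exact mem_Iio.mpr (lt_of_not_ge fun hji => ht (hi.trans (hh hji)))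
    rw [Fin.card_Iio] at this
    omega
  · intro ht
    have : #(Iic j) ≤ #{i | t ≤ h i} := card_le_card fun i hi =>
      mem_filter.mpr ⟨mem_univ i, ht.trans (hh (mem_Iic.mp hi))⟩
    rw [Fin.card_Iic] at this
    omega

lemma Antitone.filter_le_and_not_le_eq {α : Type*} [LinearOrder α] {n : ℕ}
    {h h' : Fin n → α} (hh : Antitone h) (hh' : Antitone h') (t t' : α) :
    univ.filter (fun j => t ≤ h j ∧ ¬ t' ≤ h' j)
      = univ.filter (fun j : Fin n => (j : ℕ) ∈ Ico #{i | t' ≤ h' i} #{i | t ≤ h i}) := by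
  ext j
  simp only [mem_filter, mem_univ, true_and, mem_Ico, hh.val_lt_card_filter_le_iff,
    ← hh'.val_lt_card_filter_le_iff t' j, not_lt]
  exact and_comm

lemma lt_of_antitone_add_indicator {ι : Type*} [LinearOrder ι] {lam : ι → ℤ} {J : Finset ι}
    (hJ : Antitone fun j => lam j + if j ∈ J then 1 else 0) {j k : ι} (hj : j ∈ J)
    (hk : k ∉ J) (h : lam j = lam k) : j < k := by
  refine lt_of_not_ge fun hkj => ?_
  have := hJ hkj
  simp only [hj, hk, if_true, if_false] at this
  omega

lemma prod_prod_ite_eq_prod_image {ι κ M : Type*} [Fintype ι] [LinearOrder ι] [DecidableEq κ]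
    [CommMonoid M] (f : ι → κ) (J : Finset ι) (F : ι → ι → M)
    (hJ : ∀ j ∈ J, ∀ k ∉ J, f j = f k → j < k) :
    ∏ j, ∏ k, (if j < k ∧ j ∈ J ∧ k ∉ J ∧ f j = f k then F j k else 1)
      = ∏ l ∈ univ.image f, ∏ j ∈ J.filter (f · = l), ∏ k ∈ Jᶜ.filter (f · = l), F j k := by
  have hcond : ∀ j k,
      (j < k ∧ j ∈ J ∧ k ∉ J ∧ f j = f k) ↔ j ∈ J ∧ k ∈ Jᶜ.filter (f · = f j) := by
    intro j k
    simp only [mem_filter, mem_compl]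
    constructor
    · rintro ⟨-, hj, hk, h⟩
      exact ⟨hj, hk, h.symm⟩
    · rintro ⟨hj, hk, h⟩
      exact ⟨hJ j hj k hk h.symm, hj, hk, h.symm⟩
  simp_rw [hcond, ite_and, prod_ite_irrel, prod_const_one, prod_ite_mem_eq]
  rw [← prod_fiberwise_of_maps_to (fun j _ => mem_image_of_mem f (mem_univ j))]
  refine prod_congr rfl fun l _ => prod_congr rfl fun j hj => ?_
  rw [(mem_filter.1 hj).2]

lemma exists_Ico_of_antitone_add_indicator {n : ℕ} {lam : Fin n → ℤ} {J : Finset (Fin n)}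
    (hlam : Antitone lam) (hJ : Antitone fun j => lam j + if j ∈ J then 1 else 0) (l : ℤ) :
    ∃ a b c, a ≤ b ∧ b ≤ c ∧ c ≤ n ∧
      J.filter (lam · = l) = univ.filter (fun j : Fin n => (j : ℕ) ∈ Ico a b) ∧
      Jᶜ.filter (lam · = l) = univ.filter (fun j : Fin n => (j : ℕ) ∈ Ico b c) := by
  set g : Fin n → ℤ := fun j => lam j + if j ∈ J then 1 else 0
  have hg : ∀ j, g j = if j ∈ J then lam j + 1 else lam j := fun j => by
    simp only [g]; split_ifs <;> simp
  refine ⟨#{i | l + 1 ≤ lam i}, #{i | l + 1 ≤ g i}, #{i | l ≤ lam i}, ?_, ?_, ?_, ?_, ?_⟩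
  · refine card_le_card fun i => ?_
    simp only [mem_filter, mem_univ, true_and, hg]
    split_ifs <;> omega
  · refine card_le_card fun i => ?_
    simp only [mem_filter, mem_univ, true_and, hg]
    split_ifs <;> omega
  · exact (card_filter_le _ _).trans_eq (card_fin n)
  · rw [← hJ.filter_le_and_not_le_eq hlam]
    ext j
    by_cases hj : j ∈ J <;>
      simp only [mem_filter, mem_univ, hj, hg, ↓reduceIte, true_and, false_and, false_iff] <;>
      omega
  · rw [← hlam.filter_le_and_not_le_eq hJ]
    ext j
    by_cases hj : j ∈ J <;>
      simp only [mem_filter, mem_compl, mem_univ, hj, hg, ↓reduceIte, true_and, false_and,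
        not_true_eq_false, not_false_eq_true, false_iff] <;>
      omega

lemma prod_fiber_eq_qfact_div {q : ℝ} (hq : |q| < 1) {n : ℕ} {lam : Fin n → ℤ}
    {J : Finset (Fin n)} (hlam : Antitone lam)
    (hJ : Antitone fun j => lam j + if j ∈ J then 1 else 0) (l : ℤ) :
    ∏ j ∈ J.filter (lam · = l), ∏ k ∈ Jᶜ.filter (lam · = l),
        (1 - q ^ ((k : ℕ) - (j : ℕ) + 1)) / (1 - q ^ ((k : ℕ) - (j : ℕ)))
      = qfact q (multIn lam J l + multIn lam Jᶜ l)
          / (qfact q (multIn lam J l) * qfact q (multIn lam Jᶜ l)) := by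
  obtain ⟨a, b, c, hab, hbc, hcn, hS, hT⟩ := exists_Ico_of_antitone_add_indicator hlam hJ l
  have hb : ∀ m ∈ Ico a b, m < n := fun m hm => by rw [mem_Ico] at hm; omega
  have hc : ∀ m ∈ Ico b c, m < n := fun m hm => by rw [mem_Ico] at hm; omega
  rw [multIn, multIn, hS, hT, card_filter_val_mem hb, card_filter_val_mem hc, Nat.card_Ico,
    Nat.card_Ico, show b - a + (c - b) = c - a by omega,
    ← prod_Ico_prod_Ico_one_sub_pow_div hq hab hbc, ← prod_filter_val_mem hb]
  exact prod_congr rfl fun j _ =>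
    prod_filter_val_mem hc fun k => (1 - q ^ (k - j + 1)) / (1 - q ^ (k - j))

lemma mult_eq_multIn_add_multIn_compl {n : ℕ} (lam : Fin n → ℤ) (J : Finset (Fin n))
    (l : ℤ) : mult lam l = multIn lam J l + multIn lam Jᶜ l := by
  rw [mult, multIn, multIn,
    ← card_union_of_disjoint (disjoint_filter_filter disjoint_compl_right), ← filter_union,
    union_compl]

theorem Vcoef_eq_qbinom_product (q : ℝ) (hq : 0 < q) (hq1 : q < 1) (n : ℕ)
    (lam : Fin n → ℤ) (hlam : Antitone lam) (J : Finset (Fin n))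
    (hJ : Antitone fun j => lam j + if j ∈ J then 1 else 0) :
    Vcoef q lam J
        = ∏ l ∈ Finset.univ.image lam,
            qfact q (mult lam l) / (qfact q (multIn lam J l) * qfact q (multIn lam Jᶜ l)) ∧
    Vcoef q lam J = ∏ l ∈ Finset.univ.image lam, qbinom q (mult lam l) (multIn lam J l) := by
  have hqabs : |q| < 1 := abs_lt.mpr ⟨by linarith, hq1⟩
  have hV : Vcoef q lam J = ∏ l ∈ univ.image lam,
      qfact q (mult lam l) / (qfact q (multIn lam J l) * qfact q (multIn lam Jᶜ l)) := by
    rw [Vcoef, prod_prod_ite_eq_prod_image _ _ _ fun _ hj _ hk h =>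
      lt_of_antitone_add_indicator hJ hj hk h]
    refine prod_congr rfl fun l _ => ?_
    rw [prod_fiber_eq_qfact_div hqabs hlam hJ, mult_eq_multIn_add_multIn_compl lam J]
  refine ⟨hV, hV.trans (prod_congr rfl fun l _ => ?_)⟩
  rw [qbinom, mult_eq_multIn_add_multIn_compl lam J, Nat.add_sub_cancel_left]
end

section
/- The hopping operators a_l := β_{l+1}^* β_l satisfy nonlocal commutativity a_l a_k = a_k a_l for |l - k| > 1, and the quantum Knuth relations a_{l+1} a_l^2 + q a_l^2 a_{l+1} = (1+q) a_l a_{l+1} a_l and a_{l+1}^2 a_l + q a_l a_{l+1}^2 = (1+q) a_{l+1} a_l a_{l+1}. -/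
def ann (l : ℤ) (f : Multiset ℤ → ℂ) : Multiset ℤ → ℂ := fun μ => f (l ::ₘ μ)

noncomputable def cre (q : ℝ) (l : ℤ) (f : Multiset ℤ → ℂ) : Multiset ℤ → ℂ :=
  fun μ => if 0 < μ.count l then (qint q (μ.count l) : ℂ) * f (μ.erase l) else 0

/-- Hopping operator `a_l := β_{l+1}^* β_l`. -/
noncomputable def hop (q : ℝ) (l : ℤ) (f : Multiset ℤ → ℂ) : Multiset ℤ → ℂ :=
  cre q (l + 1) (ann l f)

@[simp]
lemma qint_zero (q : ℝ) : qint q 0 = 0 := by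
  simp [qint]

-- A ring identity for every `q`: at `q = 1` both sides are `0` since `x / 0 = 0`.
lemma qint_add_two (q : ℝ) (k : ℕ) :
    qint q (k + 2) + q * qint q k = (1 + q) * qint q (k + 1) := by
  unfold qint
  ring

lemma ofReal_qint_mul_congr (q : ℝ) (f : Multiset ℤ → ℂ) {k : ℕ} {s t : Multiset ℤ}
    (h : 0 < k → s = t) : (qint q k : ℂ) * f s = qint q k * f t := by
  rcases Nat.eq_zero_or_pos k with hk | hk
  · simp [hk]
  · rw [h hk]

lemma hop_apply (q : ℝ) (l : ℤ) (f : Multiset ℤ → ℂ) (μ : Multiset ℤ) :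
    hop q l f μ = qint q (μ.count (l + 1)) * f (l ::ₘ μ.erase (l + 1)) := by
  unfold hop cre ann
  split_ifs with h
  · rfl
  · simp [Nat.eq_zero_of_not_pos h]

theorem hop_comm (q : ℝ) {l k : ℤ} (hlk : 1 < |l - k|) (f : Multiset ℤ → ℂ) (μ : Multiset ℤ) :
    hop q l (hop q k f) μ = hop q k (hop q l f) μ := by
  obtain ⟨h₁, h₂, h₃⟩ : k + 1 ≠ l + 1 ∧ k + 1 ≠ l ∧ l + 1 ≠ k := by
    cases abs_cases (l - k) <;> omega
  simp only [hop_apply, Multiset.count_cons_of_ne h₂, Multiset.count_cons_of_ne h₃,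
    Multiset.count_erase_of_ne h₁, Multiset.count_erase_of_ne h₁.symm,
    Multiset.erase_cons_tail _ h₂.symm, Multiset.erase_cons_tail _ h₃.symm,
    Multiset.cons_swap k l, Multiset.erase_comm _ (k + 1)]
  ring

theorem hop_knuth_sq_lower (q : ℝ) (l : ℤ) (f : Multiset ℤ → ℂ) (μ : Multiset ℤ) :
    hop q (l + 1) (hop q l (hop q l f)) μ + q * hop q l (hop q l (hop q (l + 1) f)) μ
      = (1 + q) * hop q l (hop q (l + 1) (hop q l f)) μ := by
  have h10 : l + 1 ≠ l := by omega
  have h20 : l + 1 + 1 ≠ l := by omega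
  have h21 : l + 1 + 1 ≠ l + 1 := by omega
  simp only [hop_apply, Multiset.count_cons_self, Multiset.count_cons_of_ne h10,
    Multiset.count_cons_of_ne h20, Multiset.count_erase_self, Multiset.count_erase_of_ne h21,
    Multiset.count_erase_of_ne h21.symm, Multiset.erase_cons_head,
    Multiset.erase_cons_tail _ h10.symm, Multiset.erase_cons_tail _ h20.symm,
    Multiset.erase_comm μ (l + 1 + 1) (l + 1)]
  set ν := l ::ₘ l ::ₘ (μ.erase (l + 1)).erase (l + 1 + 1)
  rcases hm : μ.count (l + 1) with _ | k
  · simp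
  have hB : 0 < k →
      (l + 1) ::ₘ l ::ₘ l ::ₘ ((μ.erase (l + 1)).erase (l + 1)).erase (l + 1 + 1) = ν := by
    intro hk
    have hmem : l + 1 ∈ (μ.erase (l + 1)).erase (l + 1 + 1) := by
      rwa [← Multiset.count_pos, Multiset.count_erase_of_ne h21.symm, Multiset.count_erase_self, hm]
    rw [Multiset.erase_comm _ (l + 1), Multiset.cons_swap (l + 1) l, Multiset.cons_swap (l + 1) l,
      Multiset.cons_erase hmem]
  have E : (qint q (k + 2) : ℂ) + q * qint q k = (1 + q) * qint q (k + 1) := by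
    exact_mod_cast qint_add_two q k
  rw [Nat.add_sub_cancel]
  linear_combination (qint q (μ.count (l + 1 + 1)) * qint q (k + 1) * f ν : ℂ) * E
    + (q * qint q (k + 1) * qint q (μ.count (l + 1 + 1)) : ℂ) * ofReal_qint_mul_congr q f hB

theorem hop_knuth_sq_upper (q : ℝ) (l : ℤ) (f : Multiset ℤ → ℂ) (μ : Multiset ℤ) :
    hop q (l + 1) (hop q (l + 1) (hop q l f)) μ + q * hop q l (hop q (l + 1) (hop q (l + 1) f)) μ
      = (1 + q) * hop q (l + 1) (hop q l (hop q (l + 1) f)) μ := by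
  have h20 : l + 1 + 1 ≠ l := by omega
  have h21 : l + 1 + 1 ≠ l + 1 := by omega
  simp only [hop_apply, Multiset.count_cons_self, Multiset.count_cons_of_ne h20,
    Multiset.count_cons_of_ne h21, Multiset.count_erase_self, Multiset.count_erase_of_ne h21,
    Multiset.count_erase_of_ne h21.symm, Multiset.erase_cons_head,
    Multiset.erase_cons_tail _ h20.symm, Multiset.erase_cons_tail _ h21.symm]
  rw [Multiset.cons_swap l (l + 1)]
  set ν := (l + 1) ::ₘ l ::ₘ (μ.erase (l + 1 + 1)).erase (l + 1 + 1)
  have hB : 0 < μ.count (l + 1) →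
      (l + 1) ::ₘ (l + 1) ::ₘ l ::ₘ ((μ.erase (l + 1)).erase (l + 1 + 1)).erase (l + 1 + 1)
        = ν := by
    intro hm
    have hmem : l + 1 ∈ (μ.erase (l + 1 + 1)).erase (l + 1 + 1) := by
      rwa [← Multiset.count_pos, Multiset.count_erase_of_ne h21.symm,
        Multiset.count_erase_of_ne h21.symm]
    rw [Multiset.erase_comm μ (l + 1), Multiset.erase_comm _ (l + 1), Multiset.cons_swap (l + 1) l,
      Multiset.cons_erase hmem]
  have E : (qint q (μ.count (l + 1) + 1 + 1) : ℂ) + q * qint q (μ.count (l + 1))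
      = (1 + q) * qint q (μ.count (l + 1) + 1) := by
    exact_mod_cast qint_add_two q (μ.count (l + 1))
  linear_combination
    (qint q (μ.count (l + 1 + 1)) * qint q (μ.count (l + 1 + 1) - 1) * f ν : ℂ) * E
    + (q * qint q (μ.count (l + 1 + 1)) * qint q (μ.count (l + 1 + 1) - 1) : ℂ)
      * ofReal_qint_mul_congr q f hB

theorem plactic_relations_general (q : ℝ) :
    (∀ (l k : ℤ), 1 < |l - k| → ∀ (f : Multiset ℤ → ℂ) (μ : Multiset ℤ),
        hop q l (hop q k f) μ = hop q k (hop q l f) μ) ∧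
    (∀ (l : ℤ) (f : Multiset ℤ → ℂ) (μ : Multiset ℤ),
        hop q (l + 1) (hop q l (hop q l f)) μ + (q : ℂ) * hop q l (hop q l (hop q (l + 1) f)) μ
          = (1 + (q : ℂ)) * hop q l (hop q (l + 1) (hop q l f)) μ) ∧
    (∀ (l : ℤ) (f : Multiset ℤ → ℂ) (μ : Multiset ℤ),
        hop q (l + 1) (hop q (l + 1) (hop q l f)) μ
            + (q : ℂ) * hop q l (hop q (l + 1) (hop q (l + 1) f)) μ
          = (1 + (q : ℂ)) * hop q (l + 1) (hop q l (hop q (l + 1) f)) μ) :=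
  ⟨fun _ _ hlk => hop_comm q hlk, hop_knuth_sq_lower q, hop_knuth_sq_upper q⟩

theorem plactic_relations (q : ℝ) (hq : 0 < q) (hq1 : q < 1) :
    (∀ (l k : ℤ), 1 < |l - k| → ∀ (f : Multiset ℤ → ℂ) (μ : Multiset ℤ),
        hop q l (hop q k f) μ = hop q k (hop q l f) μ) ∧
    (∀ (l : ℤ) (f : Multiset ℤ → ℂ) (μ : Multiset ℤ),
        hop q (l + 1) (hop q l (hop q l f)) μ + (q : ℂ) * hop q l (hop q l (hop q (l + 1) f)) μ
          = (1 + (q : ℂ)) * hop q l (hop q (l + 1) (hop q l f)) μ) ∧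
    (∀ (l : ℤ) (f : Multiset ℤ → ℂ) (μ : Multiset ℤ),
        hop q (l + 1) (hop q (l + 1) (hop q l f)) μ
            + (q : ℂ) * hop q l (hop q (l + 1) (hop q (l + 1) f)) μ
          = (1 + (q : ℂ)) * hop q (l + 1) (hop q l (hop q (l + 1) f)) μ) :=
  plactic_relations_general q
end

section
/- For the hopping operator a_l^* := β_{l+1} β_l^*, for any m ≥ 1, f ∈ F(Λ_n) and λ ∈ Λ_n: ((a_l^*)^m f)(λ) = [m]! · qbinom(m_l(λ), m) · f(a_l^m λ) if m ≤ m_l(λ), and 0 if m > m_l(λ); here a_l^m λ = λ + e_d + e_{d+1} + ... + e_{d+m-1} with d := min{j : λ_j = l}, which is again weakly decreasing when m ≤ m_l(λ). -/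
/-- Hopping operator `a_l^* := β_{l+1} β_l^*`. -/
noncomputable def hopA (q : ℝ) (l : ℤ) (f : Multiset ℤ → ℂ) : Multiset ℤ → ℂ :=
  ann (l + 1) (cre q l f)

/-- `a_l^m λ`: the state obtained from `λ` by moving `m` particles from site `l` to `l+1`. -/
def hopState (l : ℤ) (m : ℕ) (μ : Multiset ℤ) : Multiset ℤ :=
  Multiset.replicate m (l + 1) + (μ - Multiset.replicate m l)

/-!
Each application of `a_l^*` moves one particle from site `l` to site `l + 1` and picks up the
factor `[c]`, where `c` is the current number of particles at `l`. After `m` hops starting from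
`c = m_l(λ)` the accumulated factor is `[c][c-1]⋯[c-m+1] = [c]! / [c-m]! = [m]! · qbinom(c, m)`,
and the process is killed as soon as site `l` runs empty.
-/

section QNumbers

variable {q : ℝ}

theorem qint_eq_geom_sum (hq : q ≠ 1) (m : ℕ) : qint q m = ∑ i ∈ Finset.range m, q ^ i := by
  rw [geom_sum_eq hq, qint, ← neg_div_neg_eq, neg_sub, neg_sub]

theorem qint_succ_pos (hq₀ : 0 ≤ q) (hq₁ : q ≠ 1) (m : ℕ) : 0 < qint q (m + 1) := by
  rw [qint_eq_geom_sum hq₁]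
  exact geom_sum_pos hq₀ m.succ_ne_zero

theorem qfact_ne_zero (hq₀ : 0 ≤ q) (hq₁ : q ≠ 1) (m : ℕ) : qfact q m ≠ 0 :=
  (Finset.prod_pos fun i _ => qint_succ_pos hq₀ hq₁ i).ne'

theorem qfact_succ (m : ℕ) : qfact q (m + 1) = qfact q m * qint q (m + 1) :=
  Finset.prod_range_succ _ m

theorem qfact_mul_qbinom (hq₀ : 0 ≤ q) (hq₁ : q ≠ 1) {n k : ℕ} :
    qfact q k * qbinom q n k = qfact q n / qfact q (n - k) := by
  rw [qbinom, mul_div_assoc', mul_div_mul_left _ _ (qfact_ne_zero hq₀ hq₁ k)]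

theorem qint_mul_qfact_mul_qbinom (hq₀ : 0 ≤ q) (hq₁ : q ≠ 1) {c m : ℕ} :
    qint q (c + 1) * (qfact q m * qbinom q c m)
      = qfact q (m + 1) * qbinom q (c + 1) (m + 1) := by
  rw [qfact_mul_qbinom hq₀ hq₁, qfact_mul_qbinom hq₀ hq₁, qfact_succ, Nat.add_sub_add_right]
  ring

end QNumbers

theorem hopA_apply (q : ℝ) (l : ℤ) (f : Multiset ℤ → ℂ) (μ : Multiset ℤ) :
    hopA q l f μ
      = if l ∈ μ then (qint q (μ.count l) : ℂ) * f ((l + 1) ::ₘ μ.erase l) else 0 := by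
  have hne : l + 1 ≠ l := by omega
  simp only [hopA, ann, cre, Multiset.count_cons_of_ne hne.symm, Multiset.count_pos,
    Multiset.erase_cons_tail _ hne]

theorem hopState_zero (l : ℤ) (μ : Multiset ℤ) : hopState l 0 μ = μ := by
  simp [hopState]

theorem hopState_cons_erase (l : ℤ) (m : ℕ) {μ : Multiset ℤ} (h : l ∈ μ) :
    hopState l m ((l + 1) ::ₘ μ.erase l) = hopState l (m + 1) μ := by
  have hpos := Multiset.count_pos.mpr h
  ext x
  simp only [hopState, Multiset.count_add, Multiset.count_sub, Multiset.count_replicate,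
    Multiset.count_cons]
  rcases eq_or_ne x l with rfl | hx
  · rw [Multiset.count_erase_self]
    split_ifs <;> omega
  · rw [Multiset.count_erase_of_ne hx]
    split_ifs <;> omega

theorem creation_power_action_general (q : ℝ) (hq : 0 < q) (hq1 : q < 1) (l : ℤ) (m : ℕ)
    (f : Multiset ℤ → ℂ) (μ : Multiset ℤ) :
    (hopA q l)^[m] f μ
      = if m ≤ μ.count l then
          ((qfact q m * qbinom q (μ.count l) m : ℝ) : ℂ) * f (hopState l m μ)
        else 0 := by
  have hq₀ : 0 ≤ q := hq.le
  have hq₁ : q ≠ 1 := hq1.ne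
  induction m generalizing μ with
  | zero =>
    have h : qfact q 0 * qbinom q (μ.count l) 0 = 1 := by
      rw [qfact_mul_qbinom hq₀ hq₁, Nat.sub_zero, div_self (qfact_ne_zero hq₀ hq₁ _)]
    simp [h, hopState_zero]
  | succ m ih =>
    rw [Function.iterate_succ_apply', hopA_apply]
    by_cases hmem : l ∈ μ
    · obtain ⟨c, hc⟩ := Nat.exists_eq_add_one_of_ne_zero (Multiset.count_ne_zero.mpr hmem)
      have hc' : ((l + 1) ::ₘ μ.erase l).count l = c := by
        rw [Multiset.count_cons_of_ne (by omega), Multiset.count_erase_self, hc, Nat.add_sub_cancel]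
      rw [if_pos hmem, ih, hc', hc, hopState_cons_erase l m hmem,
        ← qint_mul_qfact_mul_qbinom hq₀ hq₁]
      by_cases hmc : m ≤ c
      · rw [if_pos hmc, if_pos (by omega)]
        push_cast
        ring
      · rw [if_neg hmc, if_neg (by omega), mul_zero]
    · rw [if_neg hmem, if_neg (by rw [Multiset.count_eq_zero_of_notMem hmem]; omega)]

theorem creation_power_action (q : ℝ) (hq : 0 < q) (hq1 : q < 1) (l : ℤ) (m : ℕ)
    (hm : 1 ≤ m) (f : Multiset ℤ → ℂ) (μ : Multiset ℤ) :
    (hopA q l)^[m] f μ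
      = if m ≤ μ.count l then
          ((qfact q m * qbinom q (μ.count l) m : ℝ) : ℂ) * f (hopState l m μ)
        else 0 :=
  creation_power_action_general q hq hq1 l m f μ
end

section
/- Pieri identity for Hall-Littlewood functions: for ξ in the open alcove π > ξ_1 > ... > ξ_n > -π, λ ∈ Λ_n, and 1 ≤ r ≤ n, one has e_r(e^{iξ_1},...,e^{iξ_n}) φ_ξ(λ) = Σ_J V_{λ,J} φ_ξ(λ + e_J), the sum over subsets J ⊆ {1,...,n} with |J| = r such that λ + e_J is weakly decreasing, where e_r is the r-th elementary symmetric polynomial, V_{λ,J} := Π_{j<k, j∈J, k∉J, λ_j=λ_k} (1-q^{k-j+1})/(1-q^{k-j}), and φ_ξ(λ) := Σ_{σ∈S_n} C(ξ_σ) e^{iλ·ξ_σ} with C(ξ) = Π_{j<k} (1-q e^{i(ξ_k-ξ_j)})/(1-e^{i(ξ_k-ξ_j)}). -/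
open Complex
open scoped Classical

noncomputable def Cfun (q : ℝ) {n : ℕ} (xi : Fin n → ℝ) : ℂ :=
  ∏ j : Fin n, ∏ k : Fin n,
    if j < k then
      (1 - (q : ℂ) * exp (I * ((xi k : ℂ) - (xi j : ℂ))))
        / (1 - exp (I * ((xi k : ℂ) - (xi j : ℂ)))) else 1

/-- The `n`-variable Hall–Littlewood function `φ_ξ(λ) = Σ_{σ ∈ S_n} C(ξ_σ) e^{i λ·ξ_σ}`. -/
noncomputable def hallLittlewood (q : ℝ) {n : ℕ} (xi : Fin n → ℝ) (lam : Fin n → ℤ) : ℂ :=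
  ∑ σ : Equiv.Perm (Fin n),
    Cfun q (xi ∘ σ) * exp (I * ∑ j : Fin n, (lam j : ℂ) * (xi (σ j) : ℂ))

/-!
Expanding the product termwise gives `e_r(e^{iξ}) φ_ξ(λ) = Σ_{|J| = r} φ_ξ(λ + e_J)`, because
`e_r` is symmetric and `e^{i(λ + e_J)·ξ_σ} = e^{iλ·ξ_σ} Π_{j ∈ J} e^{iξ_{σ j}}`.
Pairing `σ` with `σ ∘ (i i+1)` in the definition of `φ_ξ` and comparing the two products `C`
gives the straightening rule `φ_ξ(μ) = q φ_ξ(μ ∘ (i i+1))` whenever `μ_{i+1} = μ_i + 1`; this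
needs the `e^{iξ_j}` to be distinct, which is what the alcove condition provides. If `λ + e_J` is
not weakly decreasing, some adjacent `i, i+1` in one level set of `λ` has `i ∉ J ∋ i+1`, so the
rule moves `J` to the left inside each level set of `λ`, one factor `q` per inversion, until it
is left-packed. Collecting the `J` with the same left-packed set `K`, the generating function of
the inversions factors over the level sets into Gaussian binomials `[m, c]_q`; on a level set of
size `m` meeting `K` in `c` points, the product defining `V_{λ,K}` telescopes to the same
`[m, c]_q`.
-/

open Finset

lemma Fin.swap_lt_swap_iff {n : ℕ} {i i' j k : Fin n} (h : (i' : ℕ) = i + 1)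
    (h₁ : ¬(j = i ∧ k = i')) (h₂ : ¬(j = i' ∧ k = i)) :
    Equiv.swap i i' j < Equiv.swap i i' k ↔ j < k := by
  rw [Fin.lt_def, Fin.lt_def]
  simp only [Fin.ext_iff] at h₁ h₂
  simp only [Equiv.swap_apply_def]
  split_ifs <;> simp_all [Fin.ext_iff] <;> omega

lemma Fin.prod_prod_ite_lt_swap_mul {M : Type*} [CommMonoid M] {n : ℕ} (f : Fin n → Fin n → M)
    {i i' : Fin n} (h : (i' : ℕ) = i + 1) :
    (∏ j, ∏ k, if j < k then f (Equiv.swap i i' j) (Equiv.swap i i' k) else 1) * f i i'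
      = (∏ j, ∏ k, if j < k then f j k else 1) * f i' i := by
  set s := Equiv.swap i i'
  have hii' : i < i' := Fin.lt_def.2 (by omega)
  have hD : (i, i') ≠ (i', i) := fun h => hii'.ne (Prod.mk.inj h).1
  set D : Finset (Fin n × Fin n) := {(i, i'), (i', i)}
  have hcompl : ∏ p ∈ Dᶜ, (if s p.1 < s p.2 then f p.1 p.2 else 1)
      = ∏ p ∈ Dᶜ, (if p.1 < p.2 then f p.1 p.2 else 1) := by
    refine prod_congr rfl fun p hp => ?_
    simp only [D, mem_compl, mem_insert, mem_singleton, not_or] at hp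
    simp only [s, Fin.swap_lt_swap_iff h (fun h' => hp.1 (Prod.ext h'.1 h'.2))
      (fun h' => hp.2 (Prod.ext h'.1 h'.2))]
  rw [← Fintype.prod_prod_type', ← Fintype.prod_prod_type',
    Fintype.prod_equiv (s.prodCongr s) _ (fun p => if s p.1 < s p.2 then f p.1 p.2 else 1)
      fun p => by simp [s, Equiv.swap_apply_self],
    ← prod_mul_prod_compl D, ← prod_mul_prod_compl D, hcompl]
  simp [D, prod_pair hD, s, hii', hii'.not_gt]
  ac_rfl

lemma Fin.map_valEmbedding_filter_le_lt {n a b : ℕ} (hb : b ≤ n) :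
    ({j : Fin n | a ≤ (j : ℕ) ∧ (j : ℕ) < b} : Finset (Fin n)).map Fin.valEmbedding
      = Ico a b := by
  ext i
  simp only [mem_map, mem_filter, mem_univ, true_and, Fin.valEmbedding_apply, mem_Ico]
  exact ⟨fun ⟨j, hj, hji⟩ => hji ▸ hj, fun hi => ⟨⟨i, by omega⟩, hi, rfl⟩⟩

lemma Fin.card_filter_le_lt {n a b : ℕ} (hb : b ≤ n) :
    #{j : Fin n | a ≤ (j : ℕ) ∧ (j : ℕ) < b} = b - a := by
  rw [← card_map Fin.valEmbedding, Fin.map_valEmbedding_filter_le_lt hb, Nat.card_Ico]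

lemma Fin.mem_iff_le_and_lt_add_card {n a : ℕ} {S : Finset (Fin n)}
    (hS : ∀ j ∈ S, a ≤ (j : ℕ))
    (hdown : ∀ j k : Fin n, a ≤ (j : ℕ) → j ≤ k → k ∈ S → j ∈ S) (k : Fin n) :
    k ∈ S ↔ a ≤ (k : ℕ) ∧ (k : ℕ) < a + #S := by
  constructor
  · intro hk
    have hsub : ({j : Fin n | a ≤ (j : ℕ) ∧ (j : ℕ) < k + 1} : Finset (Fin n)) ⊆ S :=
      fun j hj => by
        simp only [mem_filter, mem_univ, true_and] at hj
        exact hdown j k hj.1 (Fin.le_def.2 (by omega)) hk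
    have := card_le_card hsub
    rw [Fin.card_filter_le_lt k.isLt] at this
    exact ⟨hS k hk, by omega⟩
  · rintro ⟨hak, hkS⟩
    by_contra hk
    have hsub : S ⊆ ({j : Fin n | a ≤ (j : ℕ) ∧ (j : ℕ) < k} : Finset (Fin n)) :=
      fun j hj => by
        simp only [mem_filter, mem_univ, true_and]
        exact ⟨hS j hj, Fin.lt_def.1 (lt_of_not_ge fun hkj => hk (hdown k j hak hkj hj))⟩
    have := card_le_card hsub
    rw [Fin.card_filter_le_lt k.isLt.le] at this
    omega

section QBinomial

variable {R : Type*}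

/-- The Gaussian binomial coefficient `[m, s]_q`, through the `q`-Pascal rule. -/
def qBinom [CommSemiring R] (q : R) : ℕ → ℕ → R
  | _, 0 => 1
  | 0, _ + 1 => 0
  | m + 1, s + 1 => qBinom q m (s + 1) + q ^ (m - s) * qBinom q m s

def qDescFactorial [CommRing R] (q : R) (m s : ℕ) : R :=
  ∏ p ∈ range s, (1 - q ^ (m - p))

variable {α : Type*} [LinearOrder α]

def inversionCount (B S : Finset α) : ℕ :=
  ∑ y ∈ S, #{x ∈ B \ S | x < y}

lemma inversionCount_empty (B : Finset α) : inversionCount B ∅ = 0 := rfl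

lemma inversionCount_insert_max {B S : Finset α} {b : α} (hS : S ⊆ B)
    (hb : ∀ x ∈ B, x < b) :
    inversionCount (insert b B) S = inversionCount B S := by
  have hbS : b ∉ S := fun h => (hb b (hS h)).false
  refine sum_congr rfl fun y hy => ?_
  rw [insert_sdiff_of_notMem _ hbS, filter_insert, if_neg (hb y (hS hy)).asymm]

lemma inversionCount_insert_max_insert_max {B S : Finset α} {b : α}
    (hS : S ⊆ B) (hb : ∀ x ∈ B, x < b) :
    inversionCount (insert b B) (insert b S) = inversionCount B S + (#B - #S) := by
  have hbB : b ∉ B := fun h => (hb b h).false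
  rw [inversionCount, sum_insert fun h => hbB (hS h), insert_sdiff_insert,
    sdiff_insert_of_notMem hbB, filter_true_of_mem fun x hx => hb x (mem_sdiff.1 hx).1,
    card_sdiff_of_subset hS, add_comm]
  rfl

theorem sum_powersetCard_pow_inversionCount [CommSemiring R] (q : R) (B : Finset α) (s : ℕ) :
    ∑ S ∈ B.powersetCard s, q ^ inversionCount B S = qBinom q #B s := by
  induction B using Finset.induction_on_max generalizing s with
  | empty =>
    cases s
    · simp [inversionCount_empty, qBinom]
    · rw [powersetCard_eq_empty.2 (by simp), sum_empty, card_empty, qBinom]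
  | insert b B hb ih =>
    have hbB : b ∉ B := fun h => (hb b h).false
    cases s with
    | zero => simp [inversionCount_empty, qBinom]
    | succ s =>
      have hdisj : Disjoint (B.powersetCard (s + 1)) ((B.powersetCard s).image (insert b)) := by
        refine disjoint_left.2 fun S hS hS' => ?_
        obtain ⟨T, -, rfl⟩ := mem_image.1 hS'
        exact hbB ((mem_powersetCard.1 hS).1 (mem_insert_self b T))
      have hinj : Set.InjOn (insert b) (B.powersetCard s : Set (Finset α)) :=
        fun S hS T hT h => by
          have hbS : b ∉ S := fun h => hbB ((mem_powersetCard.1 hS).1 h)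
          have hbT : b ∉ T := fun h => hbB ((mem_powersetCard.1 hT).1 h)
          simpa [erase_insert hbS, erase_insert hbT] using congrArg (·.erase b) h
      rw [powersetCard_succ_insert hbB, sum_union hdisj, sum_image hinj,
        card_insert_of_notMem hbB, qBinom, ← ih, ← ih, mul_sum]
      congr 1
      · refine sum_congr rfl fun S hS => ?_
        rw [inversionCount_insert_max (mem_powersetCard.1 hS).1 hb]
      · refine sum_congr rfl fun S hS => ?_
        obtain ⟨hSB, rfl⟩ := mem_powersetCard.1 hS
        rw [inversionCount_insert_max_insert_max hSB hb, pow_add, mul_comm]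

section Ring

variable [CommRing R] (q : R)

lemma qDescFactorial_zero_right (m : ℕ) : qDescFactorial q m 0 = 1 := prod_range_zero _

lemma qDescFactorial_succ_right (m s : ℕ) :
    qDescFactorial q m (s + 1) = qDescFactorial q m s * (1 - q ^ (m - s)) :=
  prod_range_succ _ _

lemma qDescFactorial_succ_succ (m s : ℕ) :
    qDescFactorial q (m + 1) (s + 1) = qDescFactorial q m s * (1 - q ^ (m + 1)) := by
  simp only [qDescFactorial, prod_range_succ', Nat.add_sub_add_right, Nat.sub_zero]

lemma qDescFactorial_eq_zero_of_lt {m s : ℕ} (h : m < s) : qDescFactorial q m s = 0 :=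
  prod_eq_zero (mem_range.2 h) (by simp)

theorem qBinom_mul_qDescFactorial_self (m s : ℕ) :
    qBinom q m s * qDescFactorial q s s = qDescFactorial q m s := by
  induction m generalizing s with
  | zero =>
    cases s with
    | zero => simp [qBinom, qDescFactorial_zero_right]
    | succ s => simp [qBinom, qDescFactorial_eq_zero_of_lt q (Nat.succ_pos s)]
  | succ m ih =>
    cases s with
    | zero => simp [qBinom, qDescFactorial_zero_right]
    | succ s =>
      have h1 := ih (s + 1)
      have h2 := ih s
      rw [qDescFactorial_succ_succ, qDescFactorial_succ_right] at h1
      rw [qBinom, qDescFactorial_succ_succ, qDescFactorial_succ_succ]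
      rcases le_or_gt s m with hsm | hms
      · obtain ⟨t, rfl⟩ := Nat.exists_eq_add_of_le hsm
        rw [Nat.add_sub_cancel_left] at h1 ⊢
        linear_combination h1 + q ^ t * (1 - q ^ (s + 1)) * h2
      · rw [qDescFactorial_eq_zero_of_lt q hms] at h1 h2 ⊢
        linear_combination h1 + q ^ (m - s) * (1 - q ^ (s + 1)) * h2

end Ring

lemma prod_Ico_div_eq_div_of_ne_zero {K : Type*} [Field K] (f : ℕ → K) {a b : ℕ}
    (hab : a ≤ b) (hf : ∀ k ∈ Icc a b, f k ≠ 0) :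
    ∏ k ∈ Ico a b, f (k + 1) / f k = f b / f a := by
  induction b, hab using Nat.le_induction with
  | base => simp [div_self (hf a (left_mem_Icc.2 le_rfl))]
  | succ b hab ih =>
    rw [prod_Ico_succ_top hab, ih fun k hk => hf k (Icc_subset_Icc_right b.le_succ hk)]
    have := hf b (mem_Icc.2 ⟨hab, b.le_succ⟩)
    field_simp

variable {K : Type*} [Field K] {q : K}

theorem prod_Ico_prod_Ico_eq_qBinom (hq : ∀ d ≠ 0, q ^ d ≠ 1) {c m : ℕ} (hcm : c ≤ m)
    (a : ℕ) :
    ∏ j ∈ Ico a (a + c), ∏ k ∈ Ico (a + c) (a + m),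
        (1 - q ^ (k - j + 1)) / (1 - q ^ (k - j))
      = qBinom q m c := by
  have hne : ∀ d ≠ 0, 1 - q ^ d ≠ 0 := fun d hd => sub_ne_zero.2 (hq d hd).symm
  have inner : ∀ j ∈ Ico a (a + c),
      ∏ k ∈ Ico (a + c) (a + m), (1 - q ^ (k - j + 1)) / (1 - q ^ (k - j))
        = (1 - q ^ (a + m - j)) / (1 - q ^ (a + c - j)) := by
    intro j hj
    have hj := (mem_Ico.1 hj).2
    rw [← prod_Ico_div_eq_div_of_ne_zero (fun k => 1 - q ^ (k - j)) (by omega)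
      fun k hk => hne _ (by have := (mem_Icc.1 hk).1; omega)]
    refine prod_congr rfl fun k hk => ?_
    rw [show k + 1 - j = k - j + 1 by have := (mem_Ico.1 hk).1; omega]
  have hD : qDescFactorial q c c ≠ 0 :=
    prod_ne_zero_iff.2 fun p hp => hne _ (by have := mem_range.1 hp; omega)
  rw [prod_congr rfl inner, prod_Ico_eq_prod_range, Nat.add_sub_cancel_left, prod_div_distrib,
    eq_comm, ← div_eq_of_eq_mul hD (qBinom_mul_qDescFactorial_self q m c).symm]
  simp only [qDescFactorial, Nat.add_sub_add_left]

end QBinomial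

section Factorization

variable {α β M : Type*} [DecidableEq α]

lemma Finset.sum_powerset_union_of_disjoint [AddCommMonoid M] {A B : Finset α} (h : Disjoint A B)
    (g : Finset α → M) :
    ∑ J ∈ (A ∪ B).powerset, g J
      = ∑ S ∈ A.powerset, ∑ T ∈ B.powerset, g (S ∪ T) := by
  have hunion : ∀ J ⊆ A ∪ B, J ∩ A ∪ J ∩ B = J := fun J hJ => by
    rw [← inter_union_distrib_left, inter_eq_left.2 hJ]
  rw [← sum_product']
  refine sum_nbij' (fun J => (J ∩ A, J ∩ B)) (fun p => p.1 ∪ p.2) ?_ ?_ ?_ ?_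
    fun J hJ => by rw [hunion J (mem_powerset.1 hJ)]
  all_goals
    simp only [mem_product, mem_powerset, Prod.forall, Prod.mk.injEq]
    intros
    grind [disjoint_left]

theorem Finset.sum_prod_filter_eq_prod_sum_powerset [Fintype α] [DecidableEq β] [CommSemiring M]
    (f : α → β) (W : Finset β) (g : β → Finset α → M) :
    ∑ J ∈ ({x | f x ∈ W} : Finset α).powerset, ∏ v ∈ W, g v {x ∈ J | f x = v}
      = ∏ v ∈ W, ∑ S ∈ ({x | f x = v} : Finset α).powerset, g v S := by
  induction W using Finset.induction_on with
  | empty => simp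
  | insert w W hw ih =>
    have hsplit : ({x | f x ∈ insert w W} : Finset α)
        = ({x | f x = w} : Finset α) ∪ ({x | f x ∈ W} : Finset α) := by
      ext; simp
    have hdisj : Disjoint ({x | f x = w} : Finset α) ({x | f x ∈ W} : Finset α) :=
      disjoint_filter.2 fun x _ h h' => hw (h ▸ h')
    rw [hsplit, sum_powerset_union_of_disjoint hdisj, prod_insert hw, ← ih, sum_mul_sum]
    refine sum_congr rfl fun S hS => sum_congr rfl fun T hT => ?_
    simp only [mem_powerset, subset_iff, mem_filter, mem_univ, true_and] at hS hT
    rw [prod_insert hw]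
    congr 1
    · congr 1
      ext x
      simp only [mem_filter, mem_union]
      grind
    · refine prod_congr rfl fun v hv => congrArg (g v) ?_
      ext x
      simp only [mem_filter, mem_union]
      grind

end Factorization

section LevelSets

variable {n : ℕ} (lam : Fin n → ℤ)

def fiber (v : ℤ) : Finset (Fin n) := {j | lam j = v}

def fiberCard (J : Finset (Fin n)) (v : ℤ) : ℕ := #{j ∈ J | lam j = v}

def blockStart (v : ℤ) : ℕ := #{j | v < lam j}

def IsLeftPacked (J : Finset (Fin n)) : Prop :=
  ∀ j k, j < k → lam j = lam k → k ∈ J → j ∈ J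

/-- For antitone `lam` the level set `fiber lam v` is the interval of indices starting at
`blockStart lam v`; `leftPack lam J` keeps the number of elements of `J` in every level set but
moves them to the front of it. -/
def leftPack (J : Finset (Fin n)) : Finset (Fin n) :=
  {j | (j : ℕ) < blockStart lam (lam j) + fiberCard lam J (lam j)}

def addIndicator (J : Finset (Fin n)) : Fin n → ℤ :=
  fun k => lam k + if k ∈ J then 1 else 0

variable {lam}

lemma lt_apply_iff_lt_blockStart (hlam : Antitone lam) {v : ℤ} (k : Fin n) :
    v < lam k ↔ (k : ℕ) < blockStart lam v := by
  simpa [blockStart] using Fin.mem_iff_le_and_lt_add_card (S := {j | v < lam j}) (a := 0) (by simp)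
    (fun j k _ hjk hk => by
      simp only [mem_filter, mem_univ, true_and] at hk ⊢
      exact hk.trans_le (hlam hjk)) k

lemma apply_eq_iff_blockStart_le_and_lt (hlam : Antitone lam) {v : ℤ} (k : Fin n) :
    lam k = v
      ↔ blockStart lam v ≤ (k : ℕ) ∧ (k : ℕ) < blockStart lam v + #(fiber lam v) := by
  rw [show lam k = v ↔ k ∈ fiber lam v by simp [fiber]]
  refine Fin.mem_iff_le_and_lt_add_card (fun j hj => ?_) (fun j k hj hjk hk => ?_) k
  · rw [← not_lt, ← lt_apply_iff_lt_blockStart hlam]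
    simp_all [fiber]
  · have := (lt_apply_iff_lt_blockStart hlam j).not.2 (not_lt.2 hj)
    have := hlam hjk
    simp_all [fiber]
    omega

lemma blockStart_add_card_fiber_le (v : ℤ) : blockStart lam v + #(fiber lam v) ≤ n := by
  rw [blockStart, fiber, ← card_union_of_disjoint (disjoint_filter.2 fun j _ h => h.ne')]
  exact (card_le_univ _).trans_eq (Fintype.card_fin n)

lemma fiberCard_le_card_fiber (J : Finset (Fin n)) (v : ℤ) :
    fiberCard lam J v ≤ #(fiber lam v) :=
  card_le_card (filter_subset_filter _ (subset_univ J))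

lemma IsLeftPacked.mem_and_apply_eq_iff {J : Finset (Fin n)} (hJ : IsLeftPacked lam J)
    (hlam : Antitone lam) (v : ℤ) (k : Fin n) :
    k ∈ J ∧ lam k = v
      ↔ blockStart lam v ≤ (k : ℕ) ∧ (k : ℕ) < blockStart lam v + fiberCard lam J v := by
  rw [show k ∈ J ∧ lam k = v ↔ k ∈ ({j ∈ J | lam j = v} : Finset _) by simp]
  refine Fin.mem_iff_le_and_lt_add_card (fun j hj => ?_) (fun j k hj hjk hk => ?_) k
  · exact ((apply_eq_iff_blockStart_le_and_lt hlam j).1 (mem_filter.1 hj).2).1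
  · obtain ⟨hkJ, hkv⟩ := mem_filter.1 hk
    have hjv : lam j = v := (apply_eq_iff_blockStart_le_and_lt hlam j).2
      ⟨hj, (Fin.le_def.1 hjk).trans_lt ((apply_eq_iff_blockStart_le_and_lt hlam k).1 hkv).2⟩
    rcases hjk.lt_or_eq with hlt | rfl
    · exact mem_filter.2 ⟨hJ j k hlt (hjv.trans hkv.symm) hkJ, hjv⟩
    · exact hk

lemma isLeftPacked_leftPack (J : Finset (Fin n)) : IsLeftPacked lam (leftPack lam J) := by
  intro j k hjk hjkv hk
  simp only [leftPack, mem_filter, mem_univ, true_and] at hk ⊢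
  rw [hjkv]
  exact (Fin.lt_def.1 hjk).trans hk

lemma IsLeftPacked.leftPack_eq {J : Finset (Fin n)} (hJ : IsLeftPacked lam J)
    (hlam : Antitone lam) : leftPack lam J = J := by
  ext j
  have h1 := hJ.mem_and_apply_eq_iff hlam (lam j) j
  have h2 := (apply_eq_iff_blockStart_le_and_lt hlam j).1 rfl
  simp only [leftPack, mem_filter, mem_univ, true_and, and_true] at h1 ⊢
  rw [h1]
  exact ⟨fun h => ⟨h2.1, h⟩, And.right⟩

lemma leftPack_congr {J J' : Finset (Fin n)}
    (h : ∀ j, fiberCard lam J (lam j) = fiberCard lam J' (lam j)) :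
    leftPack lam J = leftPack lam J' := by
  simp only [leftPack, h]

lemma fiberCard_leftPack (hlam : Antitone lam) (J : Finset (Fin n)) (v : ℤ) :
    fiberCard lam (leftPack lam J) v = fiberCard lam J v := by
  have hc := fiberCard_le_card_fiber (lam := lam) J v
  have hn := blockStart_add_card_fiber_le (lam := lam) v
  have hset : ({j ∈ leftPack lam J | lam j = v} : Finset (Fin n))
      = ({j : Fin n | blockStart lam v ≤ (j : ℕ)
          ∧ (j : ℕ) < blockStart lam v + fiberCard lam J v} : Finset (Fin n)) := by
    ext j
    have := apply_eq_iff_blockStart_le_and_lt hlam (v := v) j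
    simp only [leftPack, mem_filter, mem_univ, true_and]
    constructor
    · rintro ⟨hj, rfl⟩
      omega
    · intro hj
      obtain rfl : lam j = v := this.2 (by omega)
      omega
  rw [fiberCard, hset, Fin.card_filter_le_lt (by omega), Nat.add_sub_cancel_left]

lemma card_leftPack (hlam : Antitone lam) (J : Finset (Fin n)) : #(leftPack lam J) = #J := by
  have hmaps : ∀ K : Finset (Fin n), ∀ j ∈ K, lam j ∈ univ.image lam :=
    fun _ j _ => mem_image_of_mem lam (mem_univ j)
  rw [card_eq_sum_card_fiberwise (hmaps _), card_eq_sum_card_fiberwise (hmaps J)]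
  exact sum_congr rfl fun v _ => fiberCard_leftPack hlam J v

lemma antitone_addIndicator_iff (hlam : Antitone lam) (J : Finset (Fin n)) :
    Antitone (addIndicator lam J) ↔ IsLeftPacked lam J := by
  constructor
  · intro h j k hjk hjkv hk
    by_contra hj
    have := h hjk.le
    simp only [addIndicator, if_pos hk, if_neg hj] at this
    omega
  · intro h j k hjk
    have hle := hlam hjk
    simp only [addIndicator]
    by_cases hk : k ∈ J
    · by_cases hj : j ∈ J
      · simp only [if_pos hk, if_pos hj]; omega
      · have hlt : lam k < lam j := lt_of_le_of_ne hle fun heq => hj <|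
          h j k (lt_of_le_of_ne hjk fun hjk => hj (hjk ▸ hk)) heq.symm hk
        simp only [if_pos hk, if_neg hj]; omega
    · simp only [if_neg hk]; split_ifs <;> omega

lemma exists_adjacent_of_not_isLeftPacked (hlam : Antitone lam) {J : Finset (Fin n)}
    (h : ¬IsLeftPacked lam J) :
    ∃ i i' : Fin n, (i' : ℕ) = i + 1 ∧ lam i = lam i' ∧ i ∉ J ∧ i' ∈ J := by
  simp only [IsLeftPacked, not_forall] at h
  obtain ⟨j, k, hjk, hjkv, hk, hj⟩ := h
  by_contra! hno
  have hjk' := Fin.lt_def.1 hjk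
  suffices ∀ d, ∀ hd : (j : ℕ) + d ≤ k, (⟨j + d, by omega⟩ : Fin n) ∉ J from
    this (k - j) (by omega) (by simpa [Nat.add_sub_cancel' hjk'.le] using hk)
  intro d
  induction d with
  | zero => exact fun _ => by simpa using hj
  | succ d ih =>
    intro hd
    refine hno ⟨j + d, by omega⟩ _ (by simp; omega) ?_ (ih (by omega))
    have h1 := hlam (show j ≤ ⟨j + d, by omega⟩ from Fin.le_def.2 (by simp))
    have h2 := hlam (show (⟨j + d, by omega⟩ : Fin n) ≤ ⟨j + (d + 1), by omega⟩ from
      Fin.le_def.2 (by simp))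
    have h3 := hlam (show (⟨j + (d + 1), by omega⟩ : Fin n) ≤ k from
      Fin.le_def.2 (by simp; omega))
    omega

section Inversions

variable (lam)

def inversions (J : Finset (Fin n)) : Finset (Fin n × Fin n) :=
  {p | p.1 < p.2 ∧ lam p.1 = lam p.2 ∧ p.1 ∉ J ∧ p.2 ∈ J}

variable {lam}

lemma IsLeftPacked.inversions_eq_empty {J : Finset (Fin n)} (hJ : IsLeftPacked lam J) :
    inversions lam J = ∅ :=
  filter_eq_empty_iff.2 fun _ _ ⟨hlt, hv, hp1, hp2⟩ => hp1 (hJ _ _ hlt hv hp2)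

variable {J : Finset (Fin n)} {i i' : Fin n}

lemma apply_swap_eq_apply (hv : lam i = lam i') (j : Fin n) : lam (Equiv.swap i i' j) = lam j := by
  simp only [Equiv.swap_apply_def]
  split_ifs <;> simp_all

lemma mem_map_swap {j : Fin n} :
    j ∈ J.map (Equiv.swap i i').toEmbedding ↔ Equiv.swap i i' j ∈ J := by
  rw [mem_map_equiv, Equiv.symm_swap]

lemma fiberCard_map_swap (hv : lam i = lam i') (v : ℤ) :
    fiberCard lam (J.map (Equiv.swap i i').toEmbedding) v = fiberCard lam J v := by
  simp only [fiberCard, filter_map, card_map, Function.comp_def, Equiv.coe_toEmbedding,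
    apply_swap_eq_apply hv]

lemma addIndicator_comp_swap (hv : lam i = lam i') :
    addIndicator lam J ∘ Equiv.swap i i'
      = addIndicator lam (J.map (Equiv.swap i i').toEmbedding) := by
  ext j
  simp only [addIndicator, Function.comp_apply, apply_swap_eq_apply hv, mem_map_swap]

lemma card_inversions_map_swap (hadj : (i' : ℕ) = i + 1) (hv : lam i = lam i') (hi : i ∉ J)
    (hi' : i' ∈ J) :
    #(inversions lam J) = #(inversions lam (J.map (Equiv.swap i i').toEmbedding)) + 1 := by
  have hii' : i < i' := Fin.lt_def.2 (by omega)
  have hmem : (i, i') ∈ inversions lam J := by simp [inversions, hii', hv, hi, hi']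
  suffices (inversions lam J).erase (i, i')
      = (inversions lam (J.map (Equiv.swap i i').toEmbedding)).map
          ((Equiv.swap i i').prodCongr (Equiv.swap i i')).toEmbedding by
    rw [← card_erase_add_one hmem, this, card_map]
  ext ⟨j, k⟩
  simp only [mem_erase, mem_map_equiv, inversions, mem_filter, mem_univ, true_and, ne_eq,
    Prod.mk.injEq, Equiv.prodCongr_symm, Equiv.prodCongr_apply, Prod.map, Equiv.symm_swap,
    Equiv.swap_apply_self, apply_swap_eq_apply hv]
  by_cases hjk : j = i ∧ k = i'
  · obtain ⟨rfl, rfl⟩ := hjk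
    simp [Equiv.swap_apply_left, Equiv.swap_apply_right, hii'.not_gt]
  · constructor
    · rintro ⟨-, hlt, hjkv, hj, hk⟩
      exact ⟨(Fin.swap_lt_swap_iff hadj hjk fun h => hj (h.1 ▸ hi')).2 hlt, hjkv, hj, hk⟩
    · rintro ⟨hlt, hjkv, hj, hk⟩
      exact ⟨hjk, (Fin.swap_lt_swap_iff hadj hjk fun h => hj (h.1 ▸ hi')).1 hlt, hjkv, hj, hk⟩

lemma addIndicator_eq_add_one_of_adjacent (hv : lam i = lam i') (hi : i ∉ J) (hi' : i' ∈ J) :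
    addIndicator lam J i' = addIndicator lam J i + 1 := by
  simp [addIndicator, hi, hi', hv]

end Inversions

end LevelSets

section HallLittlewood

variable {n : ℕ}

lemma exp_I_mul_injective {xi : Fin n → ℝ} (hxi : Function.Injective xi)
    (hmem : ∀ j, xi j ∈ Set.Ioc (-Real.pi) Real.pi) :
    Function.Injective fun j => exp (I * xi j) := by
  intro j k h
  refine hxi (Circle.exp_injOn_Ioc (by linarith) (hmem j) (hmem k) (Circle.ext ?_))
  simpa [Circle.coe_exp, mul_comm] using h

noncomputable def planeWave (xi : Fin n → ℝ) (μ : Fin n → ℤ) (σ : Equiv.Perm (Fin n)) :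
    ℂ :=
  exp (I * ∑ j, (μ j : ℂ) * (xi (σ j) : ℂ))

noncomputable def hallLittlewoodTerm (q : ℝ) (xi : Fin n → ℝ) (μ : Fin n → ℤ)
    (σ : Equiv.Perm (Fin n)) : ℂ :=
  Cfun q (xi ∘ σ) * planeWave xi μ σ

lemma hallLittlewood_eq_sum (q : ℝ) (xi : Fin n → ℝ) (μ : Fin n → ℤ) :
    hallLittlewood q xi μ = ∑ σ, hallLittlewoodTerm q xi μ σ := rfl

lemma planeWave_mul (xi : Fin n → ℝ) (μ : Fin n → ℤ) (σ τ : Equiv.Perm (Fin n)) :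
    planeWave xi μ (σ * τ) = planeWave xi (μ ∘ τ.symm) σ := by
  rw [planeWave, planeWave, ← Equiv.sum_comp τ fun j => ((μ ∘ τ.symm) j : ℂ) * xi (σ j)]
  simp

lemma planeWave_mul_exp_eq_comp_swap (xi : Fin n → ℝ) {μ : Fin n → ℤ} {i i' : Fin n}
    (hii' : i ≠ i') (hμ : μ i' = μ i + 1) (σ : Equiv.Perm (Fin n)) :
    planeWave xi μ σ * exp (I * xi (σ i))
      = planeWave xi (μ ∘ Equiv.swap i i') σ * exp (I * xi (σ i')) := by
  have hdiff : ∑ j, (μ j : ℂ) * xi (σ j)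
      - ∑ j, ((μ ∘ Equiv.swap i i') j : ℂ) * xi (σ j) = xi (σ i') - xi (σ i) := by
    rw [← sum_sub_distrib, Fintype.sum_eq_add i i' hii' fun j hj => by
      simp [Equiv.swap_apply_of_ne_of_ne hj.1 hj.2]]
    simp [Equiv.swap_apply_left, Equiv.swap_apply_right, hμ]
    ring
  rw [planeWave, planeWave, ← exp_add, ← exp_add]
  congr 1
  linear_combination I * hdiff

lemma planeWave_addIndicator (xi : Fin n → ℝ) (μ : Fin n → ℤ) (J : Finset (Fin n))
    (σ : Equiv.Perm (Fin n)) :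
    planeWave xi (addIndicator μ J) σ
      = planeWave xi μ σ * ∏ j ∈ J, exp (I * xi (σ j)) := by
  rw [planeWave, planeWave, ← exp_sum, ← exp_add, ← mul_sum, ← mul_add]
  congr 2
  simp only [addIndicator, Int.cast_add, Int.cast_ite, Int.cast_one, Int.cast_zero, add_mul,
    sum_add_distrib, ite_mul, one_mul, zero_mul, sum_ite_mem, univ_inter]

theorem Cfun_comp_swap_mul (q : ℝ) (w : Fin n → ℝ) {i i' : Fin n} (h : (i' : ℕ) = i + 1) :
    Cfun q (w ∘ Equiv.swap i i')
        * ((1 - q * exp (I * ((w i' : ℂ) - w i))) / (1 - exp (I * ((w i' : ℂ) - w i))))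
      = Cfun q w
        * ((1 - q * exp (I * ((w i : ℂ) - w i'))) / (1 - exp (I * ((w i : ℂ) - w i')))) :=
  Fin.prod_prod_ite_lt_swap_mul
    (fun j k => (1 - q * exp (I * ((w k : ℂ) - w j))) / (1 - exp (I * ((w k : ℂ) - w j)))) h

/-- Put `a = e^{iξ_{σ i}}` and `b = e^{iξ_{σ i'}}`. After clearing the denominator `a - b`, which
is nonzero by injectivity, `Cfun_comp_swap_mul` becomes `B (a - q b) + A (b - q a) = 0` for the
two `C`-factors, and the plane waves of `μ` and `μ ∘ swap i i'` differ by the factor `b / a`. -/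
lemma hallLittlewoodTerm_add_mul_swap (q : ℝ) {xi : Fin n → ℝ}
    (hz : Function.Injective fun j => exp (I * xi j)) {μ : Fin n → ℤ} {i i' : Fin n}
    (hadj : (i' : ℕ) = i + 1) (hμ : μ i' = μ i + 1) (σ : Equiv.Perm (Fin n)) :
    hallLittlewoodTerm q xi μ σ + hallLittlewoodTerm q xi μ (σ * Equiv.swap i i')
      = q * (hallLittlewoodTerm q xi (μ ∘ Equiv.swap i i') σ
        + hallLittlewoodTerm q xi (μ ∘ Equiv.swap i i') (σ * Equiv.swap i i')) := by
  have hii' : i ≠ i' := fun h => by rw [h] at hadj; omega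
  have hab : exp (I * xi (σ i)) ≠ exp (I * xi (σ i')) := fun h => hii' (σ.injective (hz h))
  have hC := Cfun_comp_swap_mul q (xi ∘ σ) hadj
  simp only [Function.comp_apply, mul_sub, exp_sub] at hC
  rw [Function.comp_assoc, ← Equiv.Perm.coe_mul] at hC
  have hXY := planeWave_mul_exp_eq_comp_swap xi hii' hμ σ
  simp only [hallLittlewoodTerm]
  rw [planeWave_mul, planeWave_mul, Equiv.symm_swap, Function.comp_assoc, ← Equiv.Perm.coe_mul,
    Equiv.swap_mul_self, Equiv.Perm.coe_one, Function.comp_id]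
  have ha : exp (I * xi (σ i)) ≠ 0 := exp_ne_zero _
  have hb : exp (I * xi (σ i')) ≠ 0 := exp_ne_zero _
  generalize exp (I * xi (σ i)) = a at *
  generalize exp (I * xi (σ i')) = b at *
  generalize Cfun q (xi ∘ σ) = A at *
  generalize Cfun q (xi ∘ ⇑(σ * Equiv.swap i i')) = B at *
  have hab' : a - b ≠ 0 := sub_ne_zero.2 hab
  have hba' : b - a ≠ 0 := sub_ne_zero.2 hab.symm
  have hcross : B * (a - q * b) + A * (b - q * a) = 0 := by
    field_simp at hC
    refine (mul_eq_zero.1 ?_).resolve_left hba'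
    linear_combination hC
  apply mul_right_cancel₀ ha
  linear_combination planeWave xi (μ ∘ Equiv.swap i i') σ * hcross + (A - q * B) * hXY

theorem hallLittlewood_eq_mul_comp_swap (q : ℝ) {xi : Fin n → ℝ}
    (hz : Function.Injective fun j => exp (I * xi j)) {μ : Fin n → ℤ} {i i' : Fin n}
    (hadj : (i' : ℕ) = i + 1) (hμ : μ i' = μ i + 1) :
    hallLittlewood q xi μ = q * hallLittlewood q xi (μ ∘ Equiv.swap i i') := by
  have hshift : ∀ ν : Fin n → ℤ,
      ∑ σ, hallLittlewoodTerm q xi ν (σ * Equiv.swap i i') = hallLittlewood q xi ν :=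
    fun ν => Equiv.sum_comp (Equiv.mulRight (Equiv.swap i i')) (hallLittlewoodTerm q xi ν)
  have h2 :
      2 * hallLittlewood q xi μ = 2 * (q * hallLittlewood q xi (μ ∘ Equiv.swap i i')) := by
    calc 2 * hallLittlewood q xi μ
        = ∑ σ, (hallLittlewoodTerm q xi μ σ
            + hallLittlewoodTerm q xi μ (σ * Equiv.swap i i')) := by
          rw [sum_add_distrib, hshift, hallLittlewood_eq_sum]; ring
      _ = ∑ σ, q * (hallLittlewoodTerm q xi (μ ∘ Equiv.swap i i') σ
            + hallLittlewoodTerm q xi (μ ∘ Equiv.swap i i') (σ * Equiv.swap i i')) :=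
          sum_congr rfl fun σ _ => hallLittlewoodTerm_add_mul_swap q hz hadj hμ σ
      _ = 2 * (q * hallLittlewood q xi (μ ∘ Equiv.swap i i')) := by
          rw [← mul_sum, sum_add_distrib, hshift, hallLittlewood_eq_sum]; ring
  exact mul_left_cancel₀ two_ne_zero h2

theorem hallLittlewood_addIndicator_eq_pow_mul (q : ℝ) {xi : Fin n → ℝ}
    (hz : Function.Injective fun j => exp (I * xi j)) {lam : Fin n → ℤ} (hlam : Antitone lam)
    (J : Finset (Fin n)) :
    hallLittlewood q xi (addIndicator lam J)
      = q ^ #(inversions lam J) * hallLittlewood q xi (addIndicator lam (leftPack lam J)) := by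
  obtain ⟨m, hm⟩ : ∃ m, #(inversions lam J) = m := ⟨_, rfl⟩
  induction m generalizing J with
  | zero =>
    have hJ : IsLeftPacked lam J := by
      by_contra hJ
      obtain ⟨i, i', hadj, hv, hi, hi'⟩ := exists_adjacent_of_not_isLeftPacked hlam hJ
      have := card_inversions_map_swap hadj hv hi hi'
      omega
    rw [hm, hJ.leftPack_eq hlam, pow_zero, one_mul]
  | succ m ih =>
    have hJ : ¬IsLeftPacked lam J := fun hJ => by simp [hJ.inversions_eq_empty] at hm
    obtain ⟨i, i', hadj, hv, hi, hi'⟩ := exists_adjacent_of_not_isLeftPacked hlam hJ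
    have hm' := card_inversions_map_swap hadj hv hi hi'
    rw [hm, Nat.add_right_cancel_iff] at hm'
    rw [hallLittlewood_eq_mul_comp_swap q hz hadj (addIndicator_eq_add_one_of_adjacent hv hi hi'),
      addIndicator_comp_swap hv, ih _ hm'.symm, hm'.symm,
      leftPack_congr fun j => fiberCard_map_swap hv (lam j), hm, pow_succ]
    ring

lemma sum_card_eq_prod_comp_perm {M α : Type*} [CommSemiring M] [Fintype α] [DecidableEq α]
    (z : α → M) (r : ℕ) (σ : Equiv.Perm α) :
    (∑ J : Finset α, if #J = r then ∏ j ∈ J, z (σ j) else 0)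
      = ∑ J : Finset α, if #J = r then ∏ j ∈ J, z j else 0 :=
  Fintype.sum_equiv σ.finsetCongr _ _ fun J => by simp [Equiv.finsetCongr_apply, prod_map]

theorem esymm_mul_hallLittlewood (q : ℝ) (xi : Fin n → ℝ) (lam : Fin n → ℤ) (r : ℕ) :
    (∑ J : Finset (Fin n), if #J = r then ∏ j ∈ J, exp (I * xi j) else 0)
        * hallLittlewood q xi lam
      = ∑ J : Finset (Fin n), if #J = r then hallLittlewood q xi (addIndicator lam J) else 0 := by
  have hexpand : ∀ J : Finset (Fin n),
      (if #J = r then hallLittlewood q xi (addIndicator lam J) else 0)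
        = ∑ σ, if #J = r then hallLittlewoodTerm q xi (addIndicator lam J) σ else 0 := by
    intro J
    split_ifs <;> simp [hallLittlewood_eq_sum]
  rw [sum_congr rfl fun J _ => hexpand J, sum_comm, hallLittlewood_eq_sum, mul_sum]
  refine sum_congr rfl fun σ _ => ?_
  rw [← sum_card_eq_prod_comp_perm _ r σ, sum_mul]
  refine sum_congr rfl fun J _ => ?_
  split_ifs
  · rw [hallLittlewoodTerm, hallLittlewoodTerm, planeWave_addIndicator]; ring
  · rw [zero_mul]

end HallLittlewood

section Coefficient

variable {n : ℕ} {lam : Fin n → ℤ}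

lemma card_inversions_eq_sum_inversionCount (J : Finset (Fin n)) :
    #(inversions lam J)
      = ∑ v ∈ univ.image lam, inversionCount (fiber lam v) {j ∈ J | lam j = v} := by
  calc #(inversions lam J) = ∑ k ∈ J, #{j | j < k ∧ lam j = lam k ∧ j ∉ J} := by
        rw [card_eq_sum_card_fiberwise (f := Prod.snd) (t := J)
          fun p hp => (mem_filter.1 hp).2.2.2.2]
        refine sum_congr rfl fun k hk => card_nbij' Prod.fst (fun j => (j, k)) ?_ ?_ ?_ ?_
        · intro p hp
          simp only [inversions, mem_coe, mem_filter, mem_univ, true_and] at hp ⊢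
          obtain ⟨⟨hlt, hv, hp1, -⟩, rfl⟩ := hp
          exact ⟨hlt, hv, hp1⟩
        · intro j hj
          simp only [inversions, mem_coe, mem_filter, mem_univ, true_and, and_true] at hj ⊢
          exact ⟨hj.1, hj.2.1, hj.2.2, hk⟩
        · intro p hp
          simp only [mem_coe, mem_filter] at hp
          exact Prod.ext rfl hp.2.symm
        · intro j _
          rfl
    _ = ∑ v ∈ univ.image lam, inversionCount (fiber lam v) {j ∈ J | lam j = v} := by
        rw [← sum_fiberwise_of_maps_to (g := lam) (t := univ.image lam)
          fun j _ => mem_image_of_mem lam (mem_univ j)]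
        refine sum_congr rfl fun v _ => sum_congr rfl fun k hk => ?_
        obtain ⟨-, rfl⟩ := mem_filter.1 hk
        congr 1
        ext j
        simp only [fiber, mem_filter, mem_sdiff, mem_univ, true_and]
        tauto

lemma leftPack_eq_iff (hlam : Antitone lam) {J K : Finset (Fin n)} (hK : IsLeftPacked lam K) :
    leftPack lam J = K ↔ ∀ v ∈ univ.image lam, fiberCard lam J v = fiberCard lam K v := by
  constructor
  · rintro rfl v _
    exact (fiberCard_leftPack hlam J v).symm
  · intro h
    rw [← hK.leftPack_eq hlam]
    exact leftPack_congr fun j => h _ (mem_image_of_mem lam (mem_univ j))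

lemma map_valEmbedding_fiber (hlam : Antitone lam) (v : ℤ) :
    (fiber lam v).map Fin.valEmbedding
      = Ico (blockStart lam v) (blockStart lam v + #(fiber lam v)) := by
  rw [← Fin.map_valEmbedding_filter_le_lt (blockStart_add_card_fiber_le v)]
  exact congrArg _ (filter_congr fun j _ => apply_eq_iff_blockStart_le_and_lt hlam j)

variable {q : ℝ}

lemma prod_Vcoef_row_eq (hlam : Antitone lam) {K : Finset (Fin n)} (hK : IsLeftPacked lam K)
    {v : ℤ} {j : Fin n} (hj : lam j = v) :
    ∏ k : Fin n, (if j < k ∧ j ∈ K ∧ k ∉ K ∧ lam j = lam k then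
        (1 - q ^ ((k : ℕ) - (j : ℕ) + 1)) / (1 - q ^ ((k : ℕ) - (j : ℕ))) else 1)
      = if (j : ℕ) < blockStart lam v + fiberCard lam K v then
          ∏ l ∈ Ico (blockStart lam v + fiberCard lam K v) (blockStart lam v + #(fiber lam v)),
            (1 - q ^ (l - (j : ℕ) + 1)) / (1 - q ^ (l - (j : ℕ)))
        else 1 := by
  have hcond : ∀ k : Fin n, (j < k ∧ j ∈ K ∧ k ∉ K ∧ lam j = lam k)
      ↔ ((j : ℕ) < blockStart lam v + fiberCard lam K v
        ∧ blockStart lam v + fiberCard lam K v ≤ (k : ℕ)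
        ∧ (k : ℕ) < blockStart lam v + #(fiber lam v)) := by
    intro k
    have hjK := hK.mem_and_apply_eq_iff hlam v j
    have hkK := hK.mem_and_apply_eq_iff hlam v k
    have hk := apply_eq_iff_blockStart_le_and_lt hlam (v := v) k
    have hj' := (apply_eq_iff_blockStart_le_and_lt hlam j).1 hj
    constructor
    · rintro ⟨hjk, hjK', hkK', hjkv⟩
      have h1 := hjK.1 ⟨hjK', hj⟩
      have h2 := hk.1 (hjkv ▸ hj)
      have h3 :
          ¬(blockStart lam v ≤ (k : ℕ) ∧ (k : ℕ) < blockStart lam v + fiberCard lam K v) :=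
        fun h => hkK' (hkK.2 h).1
      omega
    · rintro ⟨h1, h2, h3⟩
      have hkv : lam k = v := hk.2 ⟨by omega, h3⟩
      refine ⟨Fin.lt_def.2 (by omega), (hjK.2 ⟨hj'.1, h1⟩).1, fun hkK' => ?_,
        hj.trans hkv.symm⟩
      have := hkK.1 ⟨hkK', hkv⟩
      omega
  rw [prod_congr rfl fun k _ => if_congr (hcond k) rfl rfl]
  split_ifs with hjc
  · simp only [hjc, true_and]
    rw [← prod_filter, ← Fin.map_valEmbedding_filter_le_lt (blockStart_add_card_fiber_le v),
      prod_map]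
    rfl
  · simp [hjc]

theorem Vcoef_eq_prod_qBinom (hq : ∀ d ≠ 0, q ^ d ≠ 1) (hlam : Antitone lam)
    {K : Finset (Fin n)} (hK : IsLeftPacked lam K) :
    Vcoef q lam K = ∏ v ∈ univ.image lam, qBinom q #(fiber lam v) (fiberCard lam K v) := by
  rw [Vcoef, ← prod_fiberwise_of_maps_to (g := lam) (t := univ.image lam)
    fun j _ => mem_image_of_mem lam (mem_univ j)]
  refine prod_congr rfl fun v _ => ?_
  have hc := fiberCard_le_card_fiber (lam := lam) K v
  set a := blockStart lam v
  set c := fiberCard lam K v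
  set m := #(fiber lam v)
  rw [prod_congr rfl fun j hj => prod_Vcoef_row_eq hlam hK (mem_filter.1 hj).2]
  calc _ = ∏ i ∈ Ico a (a + m), if i < a + c then
          ∏ l ∈ Ico (a + c) (a + m), (1 - q ^ (l - i + 1)) / (1 - q ^ (l - i)) else 1 := by
        rw [← map_valEmbedding_fiber hlam v, prod_map]
        rfl
    _ = ∏ i ∈ Ico a (a + c), ∏ l ∈ Ico (a + c) (a + m),
          (1 - q ^ (l - i + 1)) / (1 - q ^ (l - i)) := by
        rw [← prod_filter, Ico_filter_lt, min_eq_right (by omega)]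
    _ = qBinom q m c := prod_Ico_prod_Ico_eq_qBinom hq hc a

theorem sum_pow_card_inversions_eq_Vcoef (hq : ∀ d ≠ 0, q ^ d ≠ 1) (hlam : Antitone lam)
    {K : Finset (Fin n)} (hK : IsLeftPacked lam K) :
    ∑ J ∈ ({J | leftPack lam J = K} : Finset (Finset (Fin n))), q ^ #(inversions lam J)
      = Vcoef q lam K := by
  have hW : ({x | lam x ∈ univ.image lam} : Finset (Fin n)) = univ :=
    filter_true_of_mem fun j _ => mem_image_of_mem lam (mem_univ j)
  calc ∑ J ∈ ({J | leftPack lam J = K} : Finset (Finset (Fin n))), q ^ #(inversions lam J)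
      = ∑ J : Finset (Fin n), ∏ v ∈ univ.image lam,
          if #{j ∈ J | lam j = v} = fiberCard lam K v then
            q ^ inversionCount (fiber lam v) {j ∈ J | lam j = v} else 0 := by
        rw [sum_filter]
        refine sum_congr rfl fun J _ => ?_
        rw [prod_ite_zero, card_inversions_eq_sum_inversionCount, prod_pow_eq_pow_sum]
        exact if_congr (leftPack_eq_iff hlam hK) rfl rfl
    _ = ∏ v ∈ univ.image lam, ∑ S ∈ (fiber lam v).powerset,
          if #S = fiberCard lam K v then q ^ inversionCount (fiber lam v) S else 0 := by
        have := sum_prod_filter_eq_prod_sum_powerset lam (univ.image lam) fun v S =>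
          if #S = fiberCard lam K v then q ^ inversionCount (fiber lam v) S else 0
        rwa [hW, powerset_univ] at this
    _ = Vcoef q lam K := by
        rw [Vcoef_eq_prod_qBinom hq hlam hK]
        refine prod_congr rfl fun v _ => ?_
        rw [← sum_filter, ← powersetCard_eq_filter, sum_powersetCard_pow_inversionCount]

end Coefficient

lemma sum_leftPack_eq_Vcoef_mul (q : ℝ) {n : ℕ} {xi : Fin n → ℝ} {lam : Fin n → ℤ}
    (hq : ∀ d ≠ 0, q ^ d ≠ 1) (hlam : Antitone lam) (r : ℕ) (K : Finset (Fin n)) :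
    ∑ J ∈ ({J | leftPack lam J = K} : Finset (Finset (Fin n))),
        (if #J = r then
          (q : ℂ) ^ #(inversions lam J) * hallLittlewood q xi (addIndicator lam (leftPack lam J))
        else 0)
      = if #K = r ∧ Antitone (addIndicator lam K) then
          (Vcoef q lam K : ℂ) * hallLittlewood q xi (addIndicator lam K) else 0 := by
  by_cases hK : IsLeftPacked lam K
  · have hJK : ∀ J ∈ ({J | leftPack lam J = K} : Finset (Finset (Fin n))),
        (if #J = r then
          (q : ℂ) ^ #(inversions lam J) * hallLittlewood q xi (addIndicator lam (leftPack lam J))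
        else 0)
          = if #K = r then
            (q : ℂ) ^ #(inversions lam J) * hallLittlewood q xi (addIndicator lam K) else 0 := by
      intro J hJ
      obtain rfl := (mem_filter.1 hJ).2
      rw [card_leftPack hlam]
    rw [sum_congr rfl hJK, sum_ite_irrel, sum_const_zero, ← sum_mul,
      ← sum_pow_card_inversions_eq_Vcoef hq hlam hK]
    simp [antitone_addIndicator_iff hlam, hK]
  · have hempty : ({J | leftPack lam J = K} : Finset (Finset (Fin n))) = ∅ :=
      filter_eq_empty_iff.2 fun J _ h => hK (h ▸ isLeftPacked_leftPack J)
    rw [hempty, sum_empty, if_neg]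
    exact fun h => hK ((antitone_addIndicator_iff hlam K).1 h.2)

theorem hallLittlewood_pieri_general (q : ℝ) (hq : 0 < q) (hq1 : q < 1) (n r : ℕ)
    (xi : Fin n → ℝ) (hxi : StrictAnti xi)
    (hxiU : ∀ j, xi j < Real.pi) (hxiL : ∀ j, -Real.pi < xi j)
    (lam : Fin n → ℤ) (hlam : Antitone lam) :
    (∑ J : Finset (Fin n), if J.card = r then ∏ j ∈ J, exp (I * (xi j : ℂ)) else 0)
        * hallLittlewood q xi lam
      = ∑ J : Finset (Fin n),
          if J.card = r ∧ Antitone (fun k => lam k + if k ∈ J then 1 else 0) then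
            ((Vcoef q lam J : ℝ) : ℂ)
              * hallLittlewood q xi (fun k => lam k + if k ∈ J then 1 else 0)
          else 0 := by
  have hz := exp_I_mul_injective hxi.injective fun j => ⟨hxiL j, (hxiU j).le⟩
  have hq' : ∀ d ≠ 0, q ^ d ≠ 1 := fun d hd => (pow_lt_one₀ hq.le hq1 hd).ne
  rw [esymm_mul_hallLittlewood]
  calc _ = ∑ J : Finset (Fin n), if #J = r then
          (q : ℂ) ^ #(inversions lam J) * hallLittlewood q xi (addIndicator lam (leftPack lam J))
        else 0 :=
        sum_congr rfl fun J _ => by rw [hallLittlewood_addIndicator_eq_pow_mul q hz hlam J]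
    _ = _ := (sum_fiberwise univ (leftPack lam) _).symm
    _ = _ := sum_congr rfl fun K _ => sum_leftPack_eq_Vcoef_mul q hq' hlam r K

theorem hallLittlewood_pieri (q : ℝ) (hq : 0 < q) (hq1 : q < 1) (n r : ℕ)
    (hr : 1 ≤ r) (hrn : r ≤ n)
    (xi : Fin n → ℝ) (hxi : StrictAnti xi)
    (hxiU : ∀ j, xi j < Real.pi) (hxiL : ∀ j, -Real.pi < xi j)
    (lam : Fin n → ℤ) (hlam : Antitone lam) :
    (∑ J : Finset (Fin n), if J.card = r then ∏ j ∈ J, exp (I * (xi j : ℂ)) else 0)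
        * hallLittlewood q xi lam
      = ∑ J : Finset (Fin n),
          if J.card = r ∧ Antitone (fun k => lam k + if k ∈ J then 1 else 0) then
            ((Vcoef q lam J : ℝ) : ℂ)
              * hallLittlewood q xi (fun k => lam k + if k ∈ J then 1 else 0)
          else 0 :=
  hallLittlewood_pieri_general q hq hq1 n r xi hxi hxiU hxiL lam hlam
end

section
/- Dual Pieri identity: under the same hypotheses, e_r(e^{-iξ_1},...,e^{-iξ_n}) φ_ξ(λ) = Σ_J V_{λ,J^c} φ_ξ(λ - e_J), the sum over subsets J ⊆ {1,...,n} with |J| = r such that λ - e_J is weakly decreasing. Moreover, for 1 ≤ r < n this identity follows from the Pieri identity for e_{n-r}(e^{iξ}) upon dividing by e_n(e^{iξ}) = e^{i(ξ_1+...+ξ_n)} and using φ_ξ(λ + e_1+...+e_n) = e^{i(ξ_1+...+ξ_n)}φ_ξ(λ). -/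
open Complex
open scoped Classical

/-!
Expanding the product, `e_r(e^{-iξ})` is symmetric, so it can be absorbed into each term of the
sum over `S_n`; this gives `e_r(e^{-iξ}) φ_ξ(λ) = Σ_{|K| = r} φ_ξ(λ - e_K)` over all `r`-subsets
`K`, also those for which `λ - e_K` is not weakly decreasing. Pairing `σ` with `σ ∘ (k k+1)` in
the sum over `S_n` gives the exchange relation `φ_ξ(w) = q φ_ξ(w ∘ (k k+1))` whenever
`w_k + 1 = w_{k+1}`. Applied to `w = λ - e_K` with `k ∈ K`, `k + 1 ∉ K` and `λ_k = λ_{k+1}`, it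
moves an element of `K` one step to the right inside a level set of `λ`, at the cost of a factor
`q`. Hence `φ_ξ(λ - e_K) = q^{inv K} φ_ξ(λ - e_J)`, where `J` is obtained by pushing the elements
of `K` to the right end of each level set and `inv K` counts the pairs `j < k` of a level set with
`j ∈ K`, `k ∉ K`. It remains to see that the generating function `Σ q^{inv K}` over the `K` with
the same level-set counts as `J` is `V_{λ,Jᶜ}`: on each level set both sides are the same Gaussian
binomial coefficient, and the identity is proved by removing the smallest index, which is the
`q`-Pascal rule.
-/

open Finset

namespace DualPieri

lemma card_filter_card_filter_le_le {α : Type*} [LinearOrder α] (s : Finset α) (c : ℕ) :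
    #{i ∈ s | #{k ∈ s | i ≤ k} ≤ c} = min c #s := by
  induction s using Finset.induction_on_max generalizing c with
  | empty => simp
  | insert a t hlt ih =>
    have hat : a ∉ t := fun h => (hlt a h).false
    have htop : #{k ∈ insert a t | a ≤ k} = 1 := by
      rw [card_eq_one]
      refine ⟨a, ?_⟩
      ext k
      simp only [mem_filter, mem_insert, mem_singleton]
      constructor
      · rintro ⟨rfl | hk, hak⟩
        · rfl
        · exact absurd hak (hlt k hk).not_ge
      · rintro rfl
        exact ⟨Or.inl rfl, le_rfl⟩
    have hbelow : ∀ i ∈ t, #{k ∈ insert a t | i ≤ k} = #{k ∈ t | i ≤ k} + 1 := by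
      intro i hi
      rw [filter_insert, if_pos (hlt i hi).le, card_insert_of_notMem (by simp [hat])]
    rcases c with _ | c
    · rw [Nat.zero_min, card_eq_zero, filter_eq_empty_iff]
      intro i hi
      rw [Nat.le_zero, card_eq_zero, ← not_nonempty_iff_eq_empty, not_not]
      exact ⟨i, mem_filter.2 ⟨hi, le_rfl⟩⟩
    · rw [filter_insert, if_pos (by rw [htop]; omega), card_insert_of_notMem (by simp [hat]),
        filter_congr (fun i hi => by rw [hbelow i hi, Nat.add_le_add_iff_right]), ih,
        card_insert_of_notMem hat]
      omega

lemma prod_mul_eq_prod_mul_prod {α M : Type*} [Fintype α] [DecidableEq α] [CommMonoid M]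
    {f g h : α → M} {a : α} {u : M} (H : ∀ x, f x * (if x = a then u else 1) = g x * h x) :
    (∏ x, f x) * u = (∏ x, g x) * ∏ x, h x := by
  have := prod_congr rfl fun x (_ : x ∈ univ) => H x
  rwa [prod_mul_distrib, prod_mul_distrib, Fintype.prod_ite_eq'] at this

lemma prod_mul_ite_eq_prod_mul_ite {α M : Type*} [Fintype α] [DecidableEq α] [CommMonoid M]
    {f g : α → M} {a b : α} {u v : M}
    (H : ∀ x, f x * (if x = a then u else 1) = g x * (if x = b then v else 1)) :
    (∏ x, f x) * u = (∏ x, g x) * v := by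
  simpa using prod_mul_eq_prod_mul_prod H

section LevelSets

variable {n : ℕ} (lam : Fin n → ℤ)

def classCount (K : Finset (Fin n)) (i : Fin n) : ℕ := #{k ∈ K | lam k = lam i}

def classRank (i : Fin n) : ℕ := #{k | lam k = lam i ∧ i ≤ k}

def IsClassUpper (K : Finset (Fin n)) : Prop :=
  ∀ i ∈ K, ∀ k, i ≤ k → lam k = lam i → k ∈ K

/-- `λ - e_K`. -/
def lowerOn (K : Finset (Fin n)) (k : Fin n) : ℤ := lam k - if k ∈ K then 1 else 0

def inversions (K : Finset (Fin n)) : Finset (Fin n × Fin n) :=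
  {p | p.1 ∈ K ∧ p.2 ∉ K ∧ p.1 < p.2 ∧ lam p.1 = lam p.2}

/-- In each level set of `lam`, the last `classCount lam K` elements. -/
def normalize (K : Finset (Fin n)) : Finset (Fin n) :=
  {i | classRank lam i ≤ classCount lam K i}

variable {lam}

lemma classCount_congr (K : Finset (Fin n)) {i i' : Fin n} (h : lam i = lam i') :
    classCount lam K i = classCount lam K i' := by
  simp only [classCount, h]

lemma classCount_insert {K : Finset (Fin n)} {a : Fin n} (ha : a ∉ K) (i : Fin n) :
    classCount lam (insert a K) i = classCount lam K i + if lam a = lam i then 1 else 0 := by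
  unfold classCount
  rw [filter_insert]
  split_ifs with h
  · rw [card_insert_of_notMem (by simp [ha])]
  · rfl

lemma classCount_erase {J : Finset (Fin n)} {b : Fin n} (hb : b ∈ J) (i : Fin n) :
    classCount lam (J.erase b) i + (if lam b = lam i then 1 else 0) = classCount lam J i := by
  have := classCount_insert (lam := lam) (notMem_erase b J) i
  rwa [insert_erase hb, eq_comm] at this

lemma classCount_map {K : Finset (Fin n)} (s : Equiv.Perm (Fin n)) (hs : ∀ j, lam (s j) = lam j) :
    classCount lam (K.map s.toEmbedding) = classCount lam K := by
  funext i
  simp only [classCount, filter_map, card_map]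
  congr 1
  exact filter_congr fun k _ => by simp [hs k]

lemma lowerOn_comp_swap {K : Finset (Fin n)} {a c : Fin n} (hlac : lam a = lam c) :
    lowerOn lam K ∘ Equiv.swap a c = lowerOn lam (K.map (Equiv.swap a c).toEmbedding) := by
  funext j
  simp [lowerOn, mem_map_equiv, Equiv.apply_swap_eq_self hlac]

lemma card_eq_of_classCount_eq {K J : Finset (Fin n)} (h : classCount lam K = classCount lam J) :
    #K = #J := by
  have hmaps : ∀ s : Finset (Fin n), ∀ x ∈ s, lam x ∈ univ.image lam :=
    fun _ x _ => mem_image_of_mem lam (mem_univ x)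
  rw [card_eq_sum_card_fiberwise (hmaps K), card_eq_sum_card_fiberwise (hmaps J)]
  refine sum_congr rfl fun v hv => ?_
  obtain ⟨i, -, rfl⟩ := mem_image.1 hv
  exact congrFun h i

lemma classCount_lt_classRank {K : Finset (Fin n)} {a : Fin n} (hmin : ∀ x ∈ K, a < x) :
    classCount lam K a < classRank lam a := by
  refine card_lt_card ⟨fun k hk => ?_, fun h => ?_⟩
  · simp only [mem_filter, mem_univ, true_and] at hk ⊢
    exact ⟨hk.2, (hmin k hk.1).le⟩
  · have ha : a ∈ ({k | lam k = lam a ∧ a ≤ k} : Finset (Fin n)) := by simp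
    exact (hmin a (mem_filter.1 (h ha)).1).false

lemma classCount_insert_ne {K J : Finset (Fin n)} {a : Fin n} (ha : a ∉ K)
    (hs : classCount lam J a = 0) : classCount lam (insert a K) ≠ classCount lam J := fun h => by
  have := congrFun h a
  rw [classCount_insert ha, if_pos rfl] at this
  omega

lemma classCount_ne_of_classCount_eq_classRank {K J : Finset (Fin n)} {a : Fin n}
    (hmin : ∀ x ∈ K, a < x) (hJ : classCount lam J a = classRank lam a) :
    classCount lam K ≠ classCount lam J := fun h =>
  (classCount_lt_classRank hmin).ne (congrFun h a ▸ hJ)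

lemma antitone_lowerOn_iff (hlam : Antitone lam) {J : Finset (Fin n)} :
    Antitone (lowerOn lam J) ↔ IsClassUpper lam J := by
  constructor
  · intro h i hi k hik hki
    by_contra hk
    have := h hik
    simp only [lowerOn, if_pos hi, if_neg hk, hki] at this
    linarith
  · intro h i k hik
    rcases (hlam hik).eq_or_lt with heq | hlt
    · by_cases hi : i ∈ J
      · simp [lowerOn, hi, h i hi k hik heq, heq]
      · simp only [lowerOn, if_neg hi, heq]
        split_ifs <;> omega
    · simp only [lowerOn]
      split_ifs <;> omega

lemma IsClassUpper.of_insert {a : Fin n} {U : Finset (Fin n)} (hU : IsClassUpper lam (insert a U))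
    (hmin : ∀ x ∈ U, a < x) : IsClassUpper lam U := by
  intro i hi k hik hki
  rcases mem_insert.1 (hU i (mem_insert_of_mem hi) k hik hki) with rfl | hk
  · exact absurd (hmin i hi) (not_lt.2 hik)
  · exact hk

lemma IsClassUpper.erase {J : Finset (Fin n)} (hJ : IsClassUpper lam J) {b : Fin n}
    (hmin : ∀ k ∈ J, lam k = lam b → b ≤ k) : IsClassUpper lam (J.erase b) := by
  intro i hi k hik hki
  refine mem_erase.2 ⟨?_, hJ i (mem_of_mem_erase hi) k hik hki⟩
  rintro rfl
  exact (mem_erase.1 hi).1 (le_antisymm hik (hmin i (mem_of_mem_erase hi) hki.symm))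

lemma exists_adjacent_of_not_isClassUpper (hlam : Antitone lam) {K : Finset (Fin n)}
    (hK : ¬IsClassUpper lam K) :
    ∃ a c : Fin n, (a : ℕ) + 1 = c ∧ a ∈ K ∧ lam a = lam c ∧ c ∉ K := by
  by_contra! hstep
  refine hK fun i hi k hik hki => ?_
  obtain ⟨d, hd⟩ : ∃ d, (k : ℕ) = i + d := ⟨k - i, by rw [Fin.le_def] at hik; omega⟩
  induction d generalizing k with
  | zero => rwa [show k = i from Fin.ext (by omega)]
  | succ d ih =>
    let k' : Fin n := ⟨i + d, by omega⟩
    have hik' : i ≤ k' := Fin.le_def.2 (by simp [k'])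
    have hk'k : k' ≤ k := Fin.le_def.2 (by simp [k']; omega)
    have hk' : lam k' = lam i := le_antisymm (hlam hik') (hki ▸ hlam hk'k)
    exact hstep k' k (by simp [k']; omega) (ih k' hik' hk' rfl) (hk'.trans hki.symm)

lemma exists_tail_levelSet_eq_Icc (hlam : Antitone lam) (a : Fin n) :
    ∃ g, ∀ k, lam k = lam a ∧ a ≤ k ↔ a ≤ k ∧ k ≤ g := by
  set G : Finset (Fin n) := {k | lam k = lam a ∧ a ≤ k}
  have haG : a ∈ G := by simp [G]
  have hgG := mem_filter.1 (G.max'_mem ⟨a, haG⟩)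
  refine ⟨G.max' ⟨a, haG⟩, fun k => ⟨fun hk => ⟨hk.2, G.le_max' k (by simp [G, hk])⟩,
    fun hk => ⟨le_antisymm (hlam hk.1) ?_, hk.1⟩⟩⟩
  exact hgG.2.1 ▸ hlam hk.2

lemma exists_inter_levelSet_eq_Icc {J : Finset (Fin n)} (hJ : IsClassUpper lam J) {a g : Fin n}
    (hg : ∀ k, lam k = lam a ∧ a ≤ k ↔ a ≤ k ∧ k ≤ g) (hJa : ∀ k ∈ J, a ≤ k)
    (hs : classCount lam J a ≠ 0) :
    ∃ b, a ≤ b ∧ b ≤ g ∧ ∀ k, k ∈ J ∧ lam k = lam a ↔ b ≤ k ∧ k ≤ g := by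
  set B : Finset (Fin n) := {k ∈ J | lam k = lam a}
  have hB : B.Nonempty := card_pos.1 (Nat.pos_of_ne_zero hs)
  have hbB := mem_filter.1 (B.min'_mem hB)
  have hbg := (hg _).1 ⟨hbB.2, hJa _ hbB.1⟩
  refine ⟨B.min' hB, hbg.1, hbg.2, fun k => ⟨fun hk => ⟨B.min'_le k (mem_filter.2 hk), ?_⟩,
    fun hk => ?_⟩⟩
  · exact ((hg k).1 ⟨hk.2, hJa k hk.1⟩).2
  · have hlk : lam k = lam a := ((hg k).2 ⟨hbg.1.trans hk.1, hk.2⟩).1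
    exact ⟨hJ _ hbB.1 k hk.1 (hlk.trans hbB.2.symm), hlk⟩

lemma isClassUpper_normalize (K : Finset (Fin n)) : IsClassUpper lam (normalize lam K) := by
  intro i hi k hik hki
  simp only [normalize, mem_filter, mem_univ, true_and] at hi ⊢
  calc classRank lam k ≤ classRank lam i := card_le_card fun x hx => by
        simp only [mem_filter, mem_univ, true_and] at hx ⊢
        exact ⟨hx.1.trans hki, hik.trans hx.2⟩
    _ ≤ classCount lam K i := hi
    _ = classCount lam K k := classCount_congr K hki.symm

lemma classCount_normalize (K : Finset (Fin n)) :
    classCount lam (normalize lam K) = classCount lam K := by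
  funext i
  set C : Finset (Fin n) := {k | lam k = lam i}
  have hfilter : {k ∈ normalize lam K | lam k = lam i}
      = {k ∈ C | #{k' ∈ C | k ≤ k'} ≤ classCount lam K i} := by
    ext k
    by_cases hk : lam k = lam i
    -- `classRank` may only be unfolded after `mem_filter` has fired: otherwise the `Decidable`
    -- instance of the filter no longer matches its predicate
    · simp only [normalize, C, mem_filter, mem_univ, true_and, filter_filter, hk]
      simp only [classRank, hk, and_true, classCount_congr K hk]
    · simp [C, hk]
  rw [classCount, hfilter, card_filter_card_filter_le_le, min_eq_left]
  exact card_le_card (filter_subset_filter _ (subset_univ K))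

lemma normalize_congr {K K' : Finset (Fin n)} (h : classCount lam K = classCount lam K') :
    normalize lam K = normalize lam K' := by
  rw [normalize, normalize, h]

lemma normalize_eq_self {J : Finset (Fin n)} (hJ : IsClassUpper lam J) : normalize lam J = J := by
  ext i
  simp only [normalize, mem_filter, mem_univ, true_and]
  simp only [classRank, classCount]
  constructor
  · intro hi
    by_contra hiJ
    have hsub : {k ∈ J | lam k = lam i} ⊆ ({k | lam k = lam i ∧ i ≤ k} : Finset _).erase i := by
      intro k hk
      simp only [mem_filter, mem_erase, mem_univ, true_and] at hk ⊢
      refine ⟨fun h => hiJ (h ▸ hk.1), hk.2, ?_⟩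
      by_contra hki
      exact hiJ (hJ k hk.1 i (not_le.1 hki).le hk.2.symm)
    have := card_le_card hsub
    rw [card_erase_of_mem (by simp)] at this
    have hpos : 0 < #({k | lam k = lam i ∧ i ≤ k} : Finset _) := card_pos.2 ⟨i, by simp⟩
    omega
  · intro hi
    exact card_le_card fun k hk => by
      simp only [mem_filter, mem_univ, true_and] at hk ⊢
      exact ⟨hJ i hi k hk.2 hk.1, hk.1⟩

lemma normalize_eq_iff {J : Finset (Fin n)} (hJ : IsClassUpper lam J) (K : Finset (Fin n)) :
    normalize lam K = J ↔ classCount lam K = classCount lam J := by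
  constructor
  · rintro rfl
    exact (classCount_normalize K).symm
  · intro h
    rw [normalize_congr h, normalize_eq_self hJ]

lemma inversions_eq_empty {K : Finset (Fin n)} (hK : IsClassUpper lam K) :
    inversions lam K = ∅ :=
  filter_eq_empty_iff.2 fun p _ ⟨h1, h2, h3, h4⟩ => h2 (hK p.1 h1 p.2 h3.le h4.symm)

lemma swap_lt_swap_iff_of_adjacent {a c j k : Fin n} (hac : (a : ℕ) + 1 = c)
    (h₁ : ¬(j = a ∧ k = c)) (h₂ : ¬(j = c ∧ k = a)) :
    Equiv.swap a c j < Equiv.swap a c k ↔ j < k := by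
  rw [Fin.lt_def, Fin.lt_def]
  simp only [Equiv.swap_apply_def]
  split_ifs <;> simp only [Fin.ext_iff] at * <;> omega

lemma card_inversions_map_swap {K : Finset (Fin n)} {a c : Fin n} (hac : (a : ℕ) + 1 = c)
    (ha : a ∈ K) (hlac : lam a = lam c) (hc : c ∉ K) :
    #(inversions lam (K.map (Equiv.swap a c).toEmbedding)) + 1 = #(inversions lam K) := by
  set s := Equiv.swap a c
  have hss : ∀ j, s (s j) = j := Equiv.swap_apply_self a c
  have hac' : a < c := Fin.lt_def.2 (by omega)
  have hmem : (a, c) ∈ inversions lam K := by simp [inversions, ha, hc, hlac, hac']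
  -- the adjacent swap reverses the pair `(a, c)` and keeps the order of every other pair
  have hlt : ∀ j k, s j ∈ K → s k ∉ K → (j < k ↔ (s j, s k) ≠ (a, c) ∧ s j < s k) := by
    intro j k hj hk
    by_cases hjk : (s j, s k) = (a, c)
    · simp only [Prod.mk.injEq] at hjk
      have hj' : j = c := by rw [← hss j, hjk.1]; exact Equiv.swap_apply_left a c
      have hk' : k = a := by rw [← hss k, hjk.2]; exact Equiv.swap_apply_right a c
      subst hj' hk'
      simp [hjk, not_lt.2 hac'.le]
    · rw [← swap_lt_swap_iff_of_adjacent hac (j := s j) (k := s k) (fun h => hjk (by simp [h]))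
        (fun h => hc (h.1 ▸ hj)), hss, hss]
      exact ⟨fun h => ⟨hjk, h⟩, And.right⟩
  have hmap : inversions lam (K.map s.toEmbedding)
      = ((inversions lam K).erase (a, c)).map (s.prodCongr s).toEmbedding := by
    ext ⟨j, k⟩
    simp only [inversions, mem_filter, mem_univ, true_and, mem_erase, mem_map_equiv,
      Equiv.prodCongr_symm, Equiv.prodCongr_apply, Prod.map, s, Equiv.symm_swap]
    rw [Equiv.apply_swap_eq_self hlac, Equiv.apply_swap_eq_self hlac]
    constructor
    · rintro ⟨hj, hk, hjk, hl⟩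
      exact ⟨((hlt j k hj hk).1 hjk).1, hj, hk, ((hlt j k hj hk).1 hjk).2, hl⟩
    · rintro ⟨hne, hj, hk, hjk, hl⟩
      exact ⟨hj, hk, (hlt j k hj hk).2 ⟨hne, hjk⟩, hl⟩
  rw [hmap, card_map, card_erase_of_mem hmem, Nat.sub_add_cancel (card_pos.2 ⟨_, hmem⟩)]

lemma card_inversions_insert {K : Finset (Fin n)} {a : Fin n} (hmin : ∀ x ∈ K, a < x) :
    #(inversions lam (insert a K))
      = #(inversions lam K) + #{k | lam k = lam a ∧ a < k ∧ k ∉ K} := by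
  have haK : a ∉ K := fun h => (hmin a h).false
  set T : Finset (Fin n) := {k | lam k = lam a ∧ a < k ∧ k ∉ K}
  have hinv : inversions lam (insert a K)
      = inversions lam K ∪ T.map (Function.Embedding.sectR a _) := by
    ext ⟨j, k⟩
    simp only [inversions, T, mem_union, mem_filter, mem_univ, true_and, mem_map,
      Function.Embedding.sectR_apply, Prod.mk.injEq, mem_insert]
    constructor
    · rintro ⟨rfl | hj, hk, hjk, hl⟩
      · exact Or.inr ⟨k, ⟨hl.symm, hjk, fun h => hk (Or.inr h)⟩, rfl, rfl⟩
      · exact Or.inl ⟨hj, fun h => hk (Or.inr h), hjk, hl⟩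
    · rintro (⟨hj, hk, hjk, hl⟩ | ⟨k', ⟨hl, hak, hk⟩, rfl, rfl⟩)
      · exact ⟨Or.inr hj, fun h => h.elim (fun h => (h ▸ hmin j hj).not_gt hjk) hk, hjk, hl⟩
      · exact ⟨Or.inl rfl, fun h => h.elim (fun h => h ▸ hak |>.false) hk, hak, hl.symm⟩
  have hdisj : Disjoint (inversions lam K) (T.map (Function.Embedding.sectR a _)) := by
    simp only [disjoint_left, inversions, mem_filter, mem_map, Function.Embedding.sectR_apply]
    rintro _ ⟨-, hj, -⟩ ⟨k, -, rfl⟩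
    exact haK hj
  rw [hinv, card_union_of_disjoint hdisj, card_map]

lemma classRank_eq_classCount_insert_add {K : Finset (Fin n)} {a : Fin n}
    (hmin : ∀ x ∈ K, a < x) :
    classRank lam a = classCount lam (insert a K) a + #{k | lam k = lam a ∧ a < k ∧ k ∉ K} := by
  set T : Finset (Fin n) := {k | lam k = lam a ∧ a < k ∧ k ∉ K}
  have hrank : ({k | lam k = lam a ∧ a ≤ k} : Finset (Fin n))
      = {k ∈ insert a K | lam k = lam a} ∪ T := by
    ext k
    simp only [T, mem_union, mem_filter, mem_univ, true_and, mem_insert]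
    rcases eq_or_ne k a with rfl | hka
    · simp
    · constructor
      · rintro ⟨hl, hak⟩
        by_cases hk : k ∈ K
        · exact Or.inl ⟨Or.inr hk, hl⟩
        · exact Or.inr ⟨hl, lt_of_le_of_ne hak hka.symm, hk⟩
      · rintro (⟨rfl | hk, hl⟩ | ⟨hl, hak, -⟩)
        · exact absurd rfl hka
        · exact ⟨hl, (hmin k hk).le⟩
        · exact ⟨hl, hak.le⟩
  have hdisj : Disjoint {k ∈ insert a K | lam k = lam a} T := by
    simp only [disjoint_left, T, mem_filter, mem_insert, mem_univ, true_and]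
    rintro k ⟨rfl | hk, -⟩ ⟨-, hak, hkK⟩
    exacts [hak.false, hkK hk]
  rw [classRank, hrank, card_union_of_disjoint hdisj, classCount]

end LevelSets

section HallLittlewoodSum

variable {F : Type*} [Field F] {n : ℕ}

def pairFactor (q u v : F) : F := (1 - q * (v / u)) / (1 - v / u)

def hlCoeff (q : F) (y : Fin n → F) : F :=
  ∏ j, ∏ k, if j < k then pairFactor q (y j) (y k) else 1

def laurentMonomial (y : Fin n → F) (w : Fin n → ℤ) : F := ∏ j, y j ^ w j

/-- The Hall–Littlewood function in the multiplicative variables `x j = e^{i ξ_j}`. -/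
def hlSum (q : F) (x : Fin n → F) (w : Fin n → ℤ) : F :=
  ∑ σ : Equiv.Perm (Fin n), hlCoeff q (x ∘ σ) * laurentMonomial (x ∘ σ) w

lemma hlCoeff_comp_swap (q : F) (y : Fin n → F) {a c : Fin n} (hac : (a : ℕ) + 1 = c) :
    hlCoeff q (y ∘ Equiv.swap a c) * pairFactor q (y a) (y c)
      = hlCoeff q y * pairFactor q (y c) (y a) := by
  set s := Equiv.swap a c
  have hlt : a < c := Fin.lt_def.2 (by omega)
  have hcoeff : ∀ z : Fin n → F, hlCoeff q z
      = ∏ p : Fin n × Fin n, if p.1 < p.2 then pairFactor q (z p.1) (z p.2) else 1 := fun z => by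
    rw [Fintype.prod_prod_type]; rfl
  rw [hcoeff, hcoeff, ← Equiv.prod_comp (s.prodCongr s)]
  refine prod_mul_ite_eq_prod_mul_ite (a := (a, c)) (b := (c, a)) fun ⟨j, k⟩ => ?_
  simp only [Equiv.prodCongr_apply, Prod.map, Function.comp_apply, Equiv.swap_apply_self, s,
    Prod.mk.injEq]
  by_cases hjk : j = a ∧ k = c
  · obtain ⟨rfl, rfl⟩ := hjk
    simp [hlt, not_lt.2 hlt.le, hlt.ne]
  by_cases hkj : j = c ∧ k = a
  · obtain ⟨rfl, rfl⟩ := hkj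
    simp [hlt, not_lt.2 hlt.le, hlt.ne']
  simp only [swap_lt_swap_iff_of_adjacent hac hjk hkj, if_neg hjk, if_neg hkj]

lemma laurentMonomial_comp_swap (y : Fin n → F) (w : Fin n → ℤ) (a c : Fin n) :
    laurentMonomial (y ∘ Equiv.swap a c) w = laurentMonomial y (w ∘ Equiv.swap a c) := by
  rw [laurentMonomial, laurentMonomial, ← Equiv.prod_comp (Equiv.swap a c)]
  simp [Equiv.swap_apply_self]

lemma laurentMonomial_comp_swap_mul {y : Fin n → F} (hy : ∀ j, y j ≠ 0) {w : Fin n → ℤ}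
    {a c : Fin n} (hac : a ≠ c) (hw : w a + 1 = w c) :
    laurentMonomial y (w ∘ Equiv.swap a c) * y c = laurentMonomial y w * y a := by
  refine prod_mul_ite_eq_prod_mul_ite (a := c) (b := a) fun j => ?_
  rcases eq_or_ne j a with rfl | hja
  · simp [hac, ← hw, zpow_add_one₀ (hy j)]
  rcases eq_or_ne j c with rfl | hjc
  · simp [hac.symm, ← hw, zpow_add_one₀ (hy j)]
  · simp [hja, hjc, Equiv.swap_apply_of_ne_of_ne hja hjc]

lemma hlCoeff_mul_laurentMonomial_add_comp_swap (q : F) {y : Fin n → F} (hy : ∀ j, y j ≠ 0)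
    {w : Fin n → ℤ} {a c : Fin n} (hac : (a : ℕ) + 1 = c) (hyac : y a ≠ y c) (hw : w a + 1 = w c) :
    hlCoeff q y * laurentMonomial y w
        + hlCoeff q (y ∘ Equiv.swap a c) * laurentMonomial (y ∘ Equiv.swap a c) w
      = q * (hlCoeff q y * laurentMonomial y (w ∘ Equiv.swap a c)
        + hlCoeff q (y ∘ Equiv.swap a c) * laurentMonomial (y ∘ Equiv.swap a c)
          (w ∘ Equiv.swap a c)) := by
  have hne : a ≠ c := fun h => by rw [h] at hac; omega
  have hcoeff := hlCoeff_comp_swap q y hac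
  have hmono := laurentMonomial_comp_swap_mul hy hne hw
  have hww : w ∘ Equiv.swap a c ∘ Equiv.swap a c = w := by
    funext j; simp [Equiv.swap_apply_self]
  rw [laurentMonomial_comp_swap, laurentMonomial_comp_swap, Function.comp_assoc, hww]
  have hX := hy a
  have hY := hy c
  have hXY : y a - y c ≠ 0 := sub_ne_zero.2 hyac
  have hYX : y c - y a ≠ 0 := sub_ne_zero.2 hyac.symm
  simp only [pairFactor] at hcoeff
  field_simp at hcoeff
  have hA : hlCoeff q (y ∘ Equiv.swap a c) * (y a - q * y c) = hlCoeff q y * (q * y a - y c) := by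
    apply mul_right_cancel₀ hYX
    linear_combination hcoeff
  apply mul_right_cancel₀ hY
  linear_combination laurentMonomial y w * hA
    + (hlCoeff q (y ∘ Equiv.swap a c) - q * hlCoeff q y) * hmono

lemma hlSum_eq_mul_hlSum_comp_swap [CharZero F] (q : F) {x : Fin n → F}
    (hx : Function.Injective x) (hx0 : ∀ j, x j ≠ 0) {w : Fin n → ℤ} {a c : Fin n}
    (hac : (a : ℕ) + 1 = c) (hw : w a + 1 = w c) :
    hlSum q x w = q * hlSum q x (w ∘ Equiv.swap a c) := by
  set s := Equiv.swap a c
  have hne : a ≠ c := fun h => by rw [h] at hac; omega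
  have hshift : ∀ v, ∑ σ : Equiv.Perm (Fin n),
      hlCoeff q (x ∘ σ ∘ s) * laurentMonomial (x ∘ σ ∘ s) v = hlSum q x v := fun v =>
    Equiv.sum_comp (Equiv.mulRight s) fun σ => hlCoeff q (x ∘ σ) * laurentMonomial (x ∘ σ) v
  have h2 : (2 : F) * hlSum q x w = 2 * (q * hlSum q x (w ∘ s)) := by
    calc (2 : F) * hlSum q x w
        = ∑ σ : Equiv.Perm (Fin n), (hlCoeff q (x ∘ σ) * laurentMonomial (x ∘ σ) w
            + hlCoeff q (x ∘ σ ∘ s) * laurentMonomial (x ∘ σ ∘ s) w) := by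
          rw [sum_add_distrib, hshift, ← hlSum, two_mul]
      _ = ∑ σ : Equiv.Perm (Fin n), q * (hlCoeff q (x ∘ σ) * laurentMonomial (x ∘ σ) (w ∘ s)
            + hlCoeff q (x ∘ σ ∘ s) * laurentMonomial (x ∘ σ ∘ s) (w ∘ s)) :=
          sum_congr rfl fun σ _ => hlCoeff_mul_laurentMonomial_add_comp_swap q
            (fun j => hx0 (σ j)) hac (hx.ne (σ.injective.ne hne)) hw
      _ = 2 * (q * hlSum q x (w ∘ s)) := by
          rw [← mul_sum, sum_add_distrib, hshift, ← hlSum]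
          ring
  exact mul_left_cancel₀ two_ne_zero h2

lemma sum_ite_card_prod_comp_perm {R : Type*} [CommSemiring R] (f : Fin n → R) (r : ℕ)
    (σ : Equiv.Perm (Fin n)) :
    (∑ J : Finset (Fin n), if #J = r then ∏ j ∈ J, f (σ j) else 0)
      = ∑ J : Finset (Fin n), if #J = r then ∏ j ∈ J, f j else 0 := by
  refine Eq.trans ?_ (Equiv.sum_comp (Equiv.finsetCongr σ) _)
  simp [Equiv.finsetCongr_apply, card_map, prod_map]

lemma prod_inv_mul_laurentMonomial {y : Fin n → F} (hy : ∀ j, y j ≠ 0) (lam : Fin n → ℤ)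
    (K : Finset (Fin n)) :
    (∏ k ∈ K, (y k)⁻¹) * laurentMonomial y lam = laurentMonomial y (lowerOn lam K) := by
  rw [← Fintype.prod_ite_mem, laurentMonomial, laurentMonomial, ← prod_mul_distrib]
  refine prod_congr rfl fun k _ => ?_
  by_cases hk : k ∈ K
  · simp [lowerOn, hk, zpow_sub_one₀ (hy k), mul_comm]
  · simp [lowerOn, hk]

lemma esymm_inv_mul_hlSum_eq_sum_lowerOn {x : Fin n → F} (hx0 : ∀ j, x j ≠ 0) (q : F)
    (lam : Fin n → ℤ) (r : ℕ) :
    (∑ J : Finset (Fin n), if #J = r then ∏ j ∈ J, (x j)⁻¹ else 0) * hlSum q x lam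
      = ∑ K : Finset (Fin n), if #K = r then hlSum q x (lowerOn lam K) else 0 := by
  calc _ = ∑ σ : Equiv.Perm (Fin n), ∑ K : Finset (Fin n),
        if #K = r then hlCoeff q (x ∘ σ) * laurentMonomial (x ∘ σ) (lowerOn lam K) else 0 := by
        rw [hlSum, mul_sum]
        refine sum_congr rfl fun σ _ => ?_
        rw [← sum_ite_card_prod_comp_perm _ r σ, sum_mul]
        refine sum_congr rfl fun K _ => ?_
        split_ifs
        · rw [mul_left_comm]
          exact congrArg _ (prod_inv_mul_laurentMonomial (y := x ∘ σ) (fun j => hx0 (σ j)) lam K)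
        · rw [zero_mul]
    _ = _ := by
        rw [sum_comm]
        refine sum_congr rfl fun K _ => ?_
        split_ifs <;> simp [hlSum]

lemma hlSum_lowerOn_eq_pow_mul [CharZero F] (q : F) {x : Fin n → F}
    (hx : Function.Injective x) (hx0 : ∀ j, x j ≠ 0) {lam : Fin n → ℤ} (hlam : Antitone lam)
    (K : Finset (Fin n)) :
    hlSum q x (lowerOn lam K)
      = q ^ #(inversions lam K) * hlSum q x (lowerOn lam (normalize lam K)) := by
  induction h : #(inversions lam K) using Nat.strong_induction_on generalizing K with
  | _ N ih =>
  by_cases hK : IsClassUpper lam K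
  · rw [inversions_eq_empty hK, card_empty] at h
    rw [← h, pow_zero, one_mul, normalize_eq_self hK]
  obtain ⟨a, c, hac, ha, hlac, hc⟩ := exists_adjacent_of_not_isClassUpper hlam hK
  have hcount := card_inversions_map_swap hac ha hlac hc
  have hw : lowerOn lam K a + 1 = lowerOn lam K c := by simp [lowerOn, ha, hc, hlac]
  rw [hlSum_eq_mul_hlSum_comp_swap q hx hx0 hac hw, lowerOn_comp_swap hlac,
    ih _ (by omega) _ rfl, normalize_congr (classCount_map _ (Equiv.apply_swap_eq_self hlac)),
    ← h, ← hcount, pow_succ]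
  ring

end HallLittlewoodSum

section InversionGeneratingFunction

variable {F : Type*} [Field F] {n : ℕ}

def qRatio (q : F) (t : ℕ) : F := (1 - q ^ (t + 1)) / (1 - q ^ t)

/-- `vCoefOn q lam univ J` is `V_{λ, Jᶜ}`. -/
def vCoefOn (q : F) (lam : Fin n → ℤ) (U J : Finset (Fin n)) : F :=
  ∏ j, ∏ k, if j < k ∧ j ∈ U ∧ j ∉ J ∧ k ∈ J ∧ lam j = lam k then qRatio q (k - j) else 1

variable {q : F} {lam : Fin n → ℤ}

lemma prod_Icc_qRatio_sub (hq : ∀ t, 0 < t → q ^ t ≠ 1) {a x : ℕ} (hax : a < x) :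
    ∀ y, x ≤ y + 1 →
      ∏ t ∈ Icc x y, qRatio q (t - a) = (1 - q ^ (y + 1 - a)) / (1 - q ^ (x - a)) := by
  have hne : ∀ t, a < t → (1 : F) - q ^ (t - a) ≠ 0 := fun t ht =>
    sub_ne_zero.2 (hq _ (by omega)).symm
  intro y hxy
  induction y with
  | zero =>
    obtain rfl : x = 1 := by omega
    rw [Icc_eq_empty (by omega), prod_empty, div_self (hne 1 hax)]
  | succ y ih =>
    rcases hxy.eq_or_lt with hxy | hxy
    · rw [Icc_eq_empty (by omega), prod_empty, ← hxy, div_self (hne x hax)]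
    · rw [prod_Icc_succ_top (by omega), ih (by omega), qRatio, show y + 1 - a + 1 = y + 1 + 1 - a
        by omega]
      field_simp [hne (y + 1) (by omega), hne x hax]

lemma prod_Icc_qRatio_rsub (hq : ∀ t, 0 < t → q ^ t ≠ 1) {b x : ℕ} :
    ∀ y, x ≤ y + 1 → y < b →
      ∏ t ∈ Icc x y, qRatio q (b - t) = (1 - q ^ (b + 1 - x)) / (1 - q ^ (b - y)) := by
  have hne : ∀ t, t < b → (1 : F) - q ^ (b - t) ≠ 0 := fun t ht =>
    sub_ne_zero.2 (hq _ (by omega)).symm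
  intro y hxy hyb
  induction y with
  | zero =>
    rcases Nat.le_one_iff_eq_zero_or_eq_one.1 hxy with rfl | rfl
    · simp [qRatio]
    · rw [Icc_eq_empty (by omega), prod_empty, show b + 1 - 1 = b - 0 by omega,
        div_self (hne 0 hyb)]
  | succ y ih =>
    rcases hxy.eq_or_lt with hxy | hxy
    · rw [Icc_eq_empty (by omega), prod_empty, show b + 1 - x = b - (y + 1) by omega,
        div_self (hne (y + 1) hyb)]
    · rw [prod_Icc_succ_top (by omega), ih (by omega) (by omega), qRatio,
        show b - (y + 1) + 1 = b - y by omega]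
      field_simp [hne y (by omega), hne (y + 1) hyb]

lemma prod_ite_eq_prod_Icc (f : ℕ → F) (P : Fin n → Prop) [DecidablePred P] {x y : ℕ}
    (hy : y < n) (hP : ∀ k : Fin n, P k ↔ x ≤ k ∧ (k : ℕ) ≤ y) :
    ∏ k, (if P k then f k else 1) = ∏ t ∈ Icc x y, f t := by
  have hmap : (univ.filter P).map Fin.valEmbedding = Icc x y := by
    ext t
    simp only [mem_map, mem_filter, mem_univ, true_and, hP, Fin.valEmbedding_apply, mem_Icc]
    constructor
    · rintro ⟨k, hk, rfl⟩
      exact hk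
    · intro ht
      exact ⟨⟨t, by omega⟩, ht, rfl⟩
  rw [← prod_filter, ← hmap, prod_map]
  rfl

lemma prod_ite_qRatio_sub (hq : ∀ t, 0 < t → q ^ t ≠ 1) {P : Fin n → Prop} [DecidablePred P]
    {a x y : ℕ} (hy : y < n) (hax : a < x) (hxy : x ≤ y + 1)
    (hP : ∀ k : Fin n, P k ↔ x ≤ k ∧ (k : ℕ) ≤ y) :
    ∏ k, (if P k then qRatio q (k - a) else 1) = (1 - q ^ (y + 1 - a)) / (1 - q ^ (x - a)) :=
  (prod_ite_eq_prod_Icc (fun t => qRatio q (t - a)) P hy hP).trans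
    (prod_Icc_qRatio_sub hq hax y hxy)

lemma prod_ite_qRatio_rsub (hq : ∀ t, 0 < t → q ^ t ≠ 1) {P : Fin n → Prop} [DecidablePred P]
    {b x y : ℕ} (hxy : x ≤ y + 1) (hyb : y < b) (hbn : b ≤ n)
    (hP : ∀ k : Fin n, P k ↔ x ≤ k ∧ (k : ℕ) ≤ y) :
    ∏ k, (if P k then qRatio q (b - k) else 1) = (1 - q ^ (b + 1 - x)) / (1 - q ^ (b - y)) :=
  (prod_ite_eq_prod_Icc (fun t => qRatio q (b - t)) P (by omega) hP).trans
    (prod_Icc_qRatio_rsub hq y hxy hyb)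

lemma qPascal (hq : ∀ t, 0 < t → q ^ t ≠ 1) {u v : ℕ} (hu : 0 < u) {V V' : F}
    (h : V * ((1 - q ^ v) / (1 - q)) = V' * ((1 - q ^ u) / (1 - q))) :
    (1 - q ^ (u + v)) / (1 - q ^ u) * V = V + q ^ u * V' := by
  have hq1 : (1 : F) - q ≠ 0 := sub_ne_zero.2 (by simpa using (hq 1 one_pos).symm)
  have hqu : (1 : F) - q ^ u ≠ 0 := sub_ne_zero.2 (hq u hu).symm
  rw [pow_add]
  field_simp at h ⊢
  linear_combination q ^ u * h

lemma vCoefOn_empty (lam : Fin n → ℤ) (J : Finset (Fin n)) : vCoefOn q lam ∅ J = 1 := by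
  simp [vCoefOn]

lemma vCoefOn_insert (lam : Fin n → ℤ) {a : Fin n} {U : Finset (Fin n)} (ha : a ∉ U)
    (J : Finset (Fin n)) :
    vCoefOn q lam (insert a U) J
      = (∏ k, if a < k ∧ a ∉ J ∧ k ∈ J ∧ lam a = lam k then qRatio q (k - a) else 1)
        * vCoefOn q lam U J := by
  rw [vCoefOn, vCoefOn, mul_comm]
  refine (mul_one _).symm.trans (prod_mul_ite_eq_prod_mul_ite (a := a) (b := a) fun j => ?_)
  rcases eq_or_ne j a with rfl | hja
  · simp [ha]
  · simp [hja]

lemma vCoefOn_mul_prod_erase (lam : Fin n → ℤ) (W : Finset (Fin n)) {J : Finset (Fin n)}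
    {b : Fin n} (hb : b ∈ J) :
    vCoefOn q lam W J
        * (∏ k, if b < k ∧ b ∈ W ∧ k ∈ J.erase b ∧ lam b = lam k then qRatio q (k - b) else 1)
      = vCoefOn q lam W (J.erase b)
        * ∏ j, if j < b ∧ j ∈ W ∧ j ∉ J ∧ lam j = lam b then qRatio q (b - j) else 1 := by
  refine prod_mul_eq_prod_mul_prod (a := b) fun j => ?_
  rcases eq_or_ne j b with rfl | hjb
  · simp [hb]
  · rw [if_neg hjb, mul_one]
    refine (mul_one _).symm.trans (prod_mul_ite_eq_prod_mul_ite (a := b) (b := b) fun k => ?_)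
    rcases eq_or_ne k b with rfl | hkb
    · simp [hb]
    · simp [hkb, hjb]

lemma vCoefOn_insert_of_classCount_eq_zero {a : Fin n} {U J : Finset (Fin n)} (ha : a ∉ U)
    (hs : classCount lam J a = 0) :
    vCoefOn q lam (insert a U) J = vCoefOn q lam U J := by
  rw [vCoefOn_insert lam ha, prod_eq_one fun k _ => if_neg fun h =>
    card_ne_zero.2 ⟨k, by simp [h.2.2.1, h.2.2.2]⟩ hs, one_mul]

lemma vCoefOn_insert_of_mem {a : Fin n} {U J : Finset (Fin n)} (hmin : ∀ x ∈ U, a < x)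
    (haJ : a ∈ J) :
    vCoefOn q lam (insert a U) J = vCoefOn q lam U (J.erase a) := by
  have haU : a ∉ U := fun h => (hmin a h).false
  have := vCoefOn_mul_prod_erase (q := q) lam U haJ
  rw [prod_eq_one fun k _ => if_neg fun h => haU h.2.1, prod_eq_one fun j _ => if_neg fun h =>
    (hmin j h.2.1).not_gt h.1, mul_one, mul_one] at this
  rw [vCoefOn_insert lam haU, prod_eq_one fun k _ => if_neg fun h => h.2.1 haJ, one_mul, this]

lemma vCoefOn_insert_of_not_mem (hq : ∀ t, 0 < t → q ^ t ≠ 1) {a b g : Fin n}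
    {U J : Finset (Fin n)} (hmin : ∀ x ∈ U, a < x) (hab : a < b) (hbg : b ≤ g)
    (hclass : ∀ k, lam k = lam a ∧ a ≤ k ↔ a ≤ k ∧ k ≤ g)
    (hclassU : ∀ k, lam k = lam a → a < k → k ∈ U)
    (hJ : ∀ k, k ∈ J ∧ lam k = lam a ↔ b ≤ k ∧ k ≤ g) :
    vCoefOn q lam (insert a U) J
      = vCoefOn q lam U J + q ^ ((b : ℕ) - a) * vCoefOn q lam U (J.erase b) := by
  have haU : a ∉ U := fun h => (hmin a h).false
  have hbJ := (hJ b).2 ⟨le_rfl, hbg⟩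
  have haJ : a ∉ J := fun h => hab.not_ge ((hJ a).1 ⟨h, rfl⟩).1
  have hbU := hclassU b hbJ.2 hab
  simp only [Fin.lt_def, Fin.le_def] at hab hbg hclass hJ hmin
  have hrow : (∏ k, if a < k ∧ a ∉ J ∧ k ∈ J ∧ lam a = lam k then qRatio q (k - a) else 1)
      = (1 - q ^ ((g : ℕ) + 1 - a)) / (1 - q ^ ((b : ℕ) - a)) := by
    refine prod_ite_qRatio_sub hq g.isLt hab (by omega) fun k => ?_
    simp only [Fin.lt_def, haJ, not_false_eq_true, true_and, eq_comm (a := lam a)]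
    exact ⟨fun hk => (hJ k).1 hk.2, fun hk => ⟨by omega, (hJ k).2 hk⟩⟩
  have hrowb : (∏ k, if b < k ∧ b ∈ U ∧ k ∈ J.erase b ∧ lam b = lam k then qRatio q (k - b) else 1)
      = (1 - q ^ ((g : ℕ) + 1 - b)) / (1 - q ^ ((b : ℕ) + 1 - b)) := by
    refine prod_ite_qRatio_sub hq g.isLt (by omega) (by omega) fun k => ?_
    simp only [Fin.lt_def, mem_erase, ne_eq, ← Fin.val_inj, hbJ.2, eq_comm (a := lam a), hbU,
      true_and]
    constructor
    · rintro ⟨hbk, ⟨-, hk⟩, hl⟩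
      exact ⟨by omega, ((hJ k).1 ⟨hk, hl⟩).2⟩
    · intro hk
      obtain ⟨hkJ, hl⟩ := (hJ k).2 ⟨by omega, hk.2⟩
      exact ⟨by omega, ⟨by omega, hkJ⟩, hl⟩
  have hcolb : (∏ j, if j < b ∧ j ∈ U ∧ j ∉ J ∧ lam j = lam b then qRatio q (b - j) else 1)
      = (1 - q ^ ((b : ℕ) + 1 - (a + 1))) / (1 - q ^ ((b : ℕ) - (b - 1))) := by
    refine prod_ite_qRatio_rsub hq (by omega) (by omega) b.isLt.le fun j => ?_
    simp only [Fin.lt_def, hbJ.2]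
    constructor
    · rintro ⟨hjb, hjU, -, -⟩
      exact ⟨hmin j hjU, by omega⟩
    · intro hj
      have hlj := ((hclass j).2 ⟨by omega, by omega⟩).1
      exact ⟨by omega, hclassU j hlj (Fin.lt_def.2 (by omega)),
        fun hjJ => absurd ((hJ j).1 ⟨hjJ, hlj⟩).1 (by omega), hlj⟩
  have herase := vCoefOn_mul_prod_erase (q := q) lam U hbJ.1
  rw [hrowb, hcolb, show (b : ℕ) + 1 - (a + 1) = b - a by omega,
    show (b : ℕ) - (b - 1) = 1 by omega, show (b : ℕ) + 1 - b = 1 by omega, pow_one] at herase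
  rw [vCoefOn_insert lam haU, hrow, show (g : ℕ) + 1 - a = (b - a) + (g + 1 - b) by omega]
  exact qPascal hq (by omega) herase

lemma sum_powerset_insert_eq_pow_mul {a b : Fin n} {U J : Finset (Fin n)} (hmin : ∀ x ∈ U, a < x)
    (hbJ : b ∈ J) (hlb : lam b = lam a)
    (hcount : classCount lam J a + ((b : ℕ) - a) = classRank lam a) :
    ∑ K ∈ U.powerset, (if classCount lam (insert a K) = classCount lam J then
        q ^ #(inversions lam (insert a K)) else 0)
      = q ^ ((b : ℕ) - a) * ∑ K ∈ U.powerset,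
          if classCount lam K = classCount lam (J.erase b) then q ^ #(inversions lam K) else 0 := by
  rw [mul_sum]
  refine sum_congr rfl fun K hK => ?_
  have hKmin : ∀ x ∈ K, a < x := fun x hx => hmin x (mem_powerset.1 hK hx)
  have hiff : classCount lam (insert a K) = classCount lam J
      ↔ classCount lam K = classCount lam (J.erase b) := by
    simp only [funext_iff, classCount_insert fun h => (hKmin a h).false, ← classCount_erase hbJ,
      hlb]
    exact forall_congr' fun i => Nat.add_right_cancel_iff
  by_cases h : classCount lam K = classCount lam (J.erase b)
  · rw [if_pos (hiff.2 h), if_pos h, ← pow_add, card_inversions_insert hKmin]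
    have := classRank_eq_classCount_insert_add (lam := lam) hKmin
    rw [hiff.2 h] at this
    congr 1
    omega
  · rw [if_neg (mt hiff.1 h), if_neg h, mul_zero]

theorem sum_powerset_pow_card_inversions (hq : ∀ t, 0 < t → q ^ t ≠ 1) (hlam : Antitone lam)
    {U : Finset (Fin n)} (hU : IsClassUpper lam U) {J : Finset (Fin n)}
    (hJ : IsClassUpper lam J) (hJU : J ⊆ U) :
    ∑ K ∈ U.powerset, (if classCount lam K = classCount lam J then q ^ #(inversions lam K) else 0)
      = vCoefOn q lam U J := by
  induction U using Finset.induction_on_min generalizing J with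
  | empty =>
    obtain rfl := subset_empty.1 hJU
    simp [vCoefOn_empty, inversions_eq_empty fun i hi => absurd hi (notMem_empty i)]
  | insert a U hmin ih =>
  have haU : a ∉ U := fun h => (hmin a h).false
  have hU' := hU.of_insert hmin
  have hJa : ∀ k ∈ J, a ≤ k := fun k hk =>
    (mem_insert.1 (hJU hk)).elim (fun h => h.ge) fun h => (hmin k h).le
  have hsubU : ∀ {J' : Finset (Fin n)}, J' ⊆ J → a ∉ J' → J' ⊆ U := fun hJ' ha k hk =>
    (mem_insert.1 (hJU (hJ' hk))).resolve_left fun h => ha (h ▸ hk)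
  rw [sum_powerset_insert haU]
  by_cases hs : classCount lam J a = 0
  · rw [ih hU' hJ (hsubU subset_rfl fun h => card_ne_zero.2 ⟨a, by simp [h]⟩ hs),
      sum_eq_zero fun K hK => if_neg (classCount_insert_ne
        (fun h => (hmin a (mem_powerset.1 hK h)).false) hs), add_zero,
      vCoefOn_insert_of_classCount_eq_zero haU hs]
  obtain ⟨g, hg⟩ := exists_tail_levelSet_eq_Icc hlam a
  obtain ⟨b, hab, hbg, hb⟩ := exists_inter_levelSet_eq_Icc hJ hg hJa hs
  have hrank : classRank lam a = (g : ℕ) + 1 - a := by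
    rw [classRank, ← Fin.card_Icc]; congr 1; ext k; simp [hg]
  have hcount : classCount lam J a = (g : ℕ) + 1 - b := by
    rw [classCount, ← Fin.card_Icc]; congr 1; ext k; simp [hb]
  have hbJ := (hb b).2 ⟨le_rfl, hbg⟩
  have hJ' : IsClassUpper lam (J.erase b) :=
    hJ.erase fun k hk hl => ((hb k).1 ⟨hk, hl.trans hbJ.2⟩).1
  have haJ' : a ∉ J.erase b := fun h =>
    (mem_erase.1 h).1 (le_antisymm ((hb a).1 ⟨mem_of_mem_erase h, rfl⟩).1 hab).symm
  rw [sum_powerset_insert_eq_pow_mul hmin hbJ.1 hbJ.2 (by rw [Fin.le_def] at hab hbg; omega),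
    ih hU' hJ' (hsubU (erase_subset b J) haJ')]
  rcases hab.eq_or_lt with rfl | hab
  · rw [sum_eq_zero fun K hK => if_neg (classCount_ne_of_classCount_eq_classRank
        (fun x hx => hmin x (mem_powerset.1 hK hx)) (hcount.trans hrank.symm)), zero_add,
      Nat.sub_self, pow_zero, one_mul, vCoefOn_insert_of_mem hmin hbJ.1]
  · have hclassU : ∀ k, lam k = lam a → a < k → k ∈ U := fun k hl hak =>
      (mem_insert.1 (hU a (mem_insert_self a U) k hak.le hl)).resolve_left hak.ne'
    rw [ih hU' hJ (hsubU subset_rfl fun h => hab.not_ge ((hb a).1 ⟨h, rfl⟩).1),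
      vCoefOn_insert_of_not_mem hq hmin hab hbg hg hclassU hb]

end InversionGeneratingFunction

section Pieri

variable {F : Type*} [Field F] {n : ℕ} {q : F} {lam : Fin n → ℤ}

lemma sum_filter_normalize_eq (hq : ∀ t, 0 < t → q ^ t ≠ 1) (hlam : Antitone lam)
    (J : Finset (Fin n)) (r : ℕ) :
    ∑ K with normalize lam K = J, (if #K = r then q ^ #(inversions lam K) else 0)
      = if #J = r ∧ Antitone (lowerOn lam J) then vCoefOn q lam univ J else 0 := by
  simp only [antitone_lowerOn_iff hlam]
  by_cases hJ : IsClassUpper lam J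
  · have hfilter : univ.filter (fun K => normalize lam K = J)
        = univ.filter fun K => classCount lam K = classCount lam J :=
      filter_congr fun K _ => normalize_eq_iff hJ K
    simp only [hJ, and_true]
    rw [hfilter, sum_filter, ← powerset_univ, ← sum_powerset_pow_card_inversions hq hlam
      (fun _ _ k _ _ => mem_univ k) hJ (subset_univ J)]
    have hcard : ∀ K, classCount lam K = classCount lam J → #K = #J := fun K =>
      card_eq_of_classCount_eq
    split_ifs with hr
    · exact sum_congr rfl fun K _ => by split_ifs with hK <;> simp_all
    · exact sum_eq_zero fun K _ => by split_ifs with hK <;> simp_all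
  · rw [if_neg (fun h => hJ h.2)]
    refine sum_eq_zero fun K hK => absurd ?_ hJ
    exact (mem_filter.1 hK).2 ▸ isClassUpper_normalize K

theorem hlSum_dual_pieri [CharZero F] (hq : ∀ t, 0 < t → q ^ t ≠ 1) {x : Fin n → F}
    (hx : Function.Injective x) (hx0 : ∀ j, x j ≠ 0) (hlam : Antitone lam) (r : ℕ) :
    (∑ J : Finset (Fin n), if #J = r then ∏ j ∈ J, (x j)⁻¹ else 0) * hlSum q x lam
      = ∑ J : Finset (Fin n), if #J = r ∧ Antitone (lowerOn lam J) then
          vCoefOn q lam univ J * hlSum q x (lowerOn lam J) else 0 := by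
  rw [esymm_inv_mul_hlSum_eq_sum_lowerOn hx0, ← sum_fiberwise univ (normalize lam)]
  refine sum_congr rfl fun J _ => ?_
  calc ∑ K with normalize lam K = J, (if #K = r then hlSum q x (lowerOn lam K) else 0)
      = ∑ K with normalize lam K = J,
          (if #K = r then q ^ #(inversions lam K) else 0) * hlSum q x (lowerOn lam J) := by
        refine sum_congr rfl fun K hK => ?_
        rw [hlSum_lowerOn_eq_pow_mul q hx hx0 hlam, (mem_filter.1 hK).2, ite_mul, zero_mul]
    _ = _ := by rw [← sum_mul, sum_filter_normalize_eq hq hlam, ite_mul, zero_mul]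

end Pieri

lemma hallLittlewood_eq_hlSum (q : ℝ) {n : ℕ} (xi : Fin n → ℝ) (w : Fin n → ℤ) :
    hallLittlewood q xi w = hlSum (q : ℂ) (fun j => exp (I * xi j)) w := by
  refine sum_congr rfl fun σ _ => ?_
  congr 1
  · simp only [Cfun, hlCoeff, pairFactor, Function.comp_apply, mul_sub, Complex.exp_sub]
  · rw [mul_sum, Complex.exp_sum]
    refine prod_congr rfl fun j _ => ?_
    rw [Function.comp_apply, ← Complex.exp_int_mul]
    ring_nf

lemma ofReal_Vcoef_compl (q : ℝ) {n : ℕ} (lam : Fin n → ℤ) (J : Finset (Fin n)) :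
    ((Vcoef q lam Jᶜ : ℝ) : ℂ) = vCoefOn (q : ℂ) lam univ J := by
  simp only [Vcoef, vCoefOn, qRatio, mem_compl, not_not, mem_univ, true_and, ofReal_prod]
  refine prod_congr rfl fun j _ => prod_congr rfl fun k _ => ?_
  split_ifs <;> push_cast <;> rfl

lemma injective_exp_I_mul {n : ℕ} {xi : Fin n → ℝ} (hxi : Function.Injective xi)
    (hU : ∀ j, xi j < Real.pi) (hL : ∀ j, -Real.pi < xi j) :
    Function.Injective fun j => exp (I * xi j) := by
  intro j k h
  have := congrArg arg h
  simp only [mul_comm I, exp_mul_I] at this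
  rw [arg_cos_add_sin_mul_I ⟨hL j, (hU j).le⟩, arg_cos_add_sin_mul_I ⟨hL k, (hU k).le⟩] at this
  exact hxi this

end DualPieri

theorem hallLittlewood_dual_pieri_general (q : ℝ) (hq : 0 < q) (hq1 : q < 1) (n r : ℕ)
    (xi : Fin n → ℝ) (hxi : StrictAnti xi)
    (hxiU : ∀ j, xi j < Real.pi) (hxiL : ∀ j, -Real.pi < xi j)
    (lam : Fin n → ℤ) (hlam : Antitone lam) :
    (∑ J : Finset (Fin n), if J.card = r then ∏ j ∈ J, exp (-I * (xi j : ℂ)) else 0)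
        * hallLittlewood q xi lam
      = ∑ J : Finset (Fin n),
          if J.card = r ∧ Antitone (fun k => lam k - if k ∈ J then 1 else 0) then
            ((Vcoef q lam Jᶜ : ℝ) : ℂ)
              * hallLittlewood q xi (fun k => lam k - if k ∈ J then 1 else 0)
          else 0 := by
  have hq' : ∀ t, 0 < t → (q : ℂ) ^ t ≠ 1 := fun t ht => by
    rw [← ofReal_pow, Ne, ofReal_eq_one]
    exact (pow_lt_one₀ hq.le hq1 ht.ne').ne
  have hinv : ∀ j, exp (-I * xi j) = (exp (I * xi j))⁻¹ := fun j => by rw [neg_mul, exp_neg]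
  simp only [hinv, DualPieri.hallLittlewood_eq_hlSum, DualPieri.ofReal_Vcoef_compl]
  exact DualPieri.hlSum_dual_pieri hq' (DualPieri.injective_exp_I_mul hxi.injective hxiU hxiL)
    (fun j => exp_ne_zero _) hlam r

theorem hallLittlewood_dual_pieri (q : ℝ) (hq : 0 < q) (hq1 : q < 1) (n r : ℕ)
    (hr : 1 ≤ r) (hrn : r ≤ n)
    (xi : Fin n → ℝ) (hxi : StrictAnti xi)
    (hxiU : ∀ j, xi j < Real.pi) (hxiL : ∀ j, -Real.pi < xi j)
    (lam : Fin n → ℤ) (hlam : Antitone lam) :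
    (∑ J : Finset (Fin n), if J.card = r then ∏ j ∈ J, exp (-I * (xi j : ℂ)) else 0)
        * hallLittlewood q xi lam
      = ∑ J : Finset (Fin n),
          if J.card = r ∧ Antitone (fun k => lam k - if k ∈ J then 1 else 0) then
            ((Vcoef q lam Jᶜ : ℝ) : ℂ)
              * hallLittlewood q xi (fun k => lam k - if k ∈ J then 1 else 0)
          else 0 :=
  hallLittlewood_dual_pieri_general q hq hq1 n r xi hxi hxiU hxiL lam hlam
end
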